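/- arXiv:2509.06032 — 11 statements merged into one kernel-verified Lean document; each statement's English description precedes it below -/
import Mathlib

section
/- For any integer m ≥ 0 and any odd integer k ≥ 1, the formal power series identity ∑_{n≥1} (-1)^{n-1} q^{k·n(n-1)/2 + mn} / (1 - q^n) = ∑_{ℓ≥1} ∑_{j : m + k(ℓ-1)/2 ≤ j < 2m + k(2ℓ-1)} q^{jℓ} holds (as an identity of formal power series in q, where j ranges over integers in the given interval). -/
open scoped Classical

/-- `hcoef m k N` is the coefficient of `q^N` in
`∑_{n≥1} (-1)^{n-1} q^{k·n(n-1)/2 + m·n}/(1-q^n)`. -/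
noncomputable def hcoef (m k N : ℕ) : ℤ :=
  ∑ n ∈ Finset.Icc 1 (2*N+2),
    (-1)^(n-1) *
      (if k*(n*(n-1)/2) + m*n ≤ N ∧ n ∣ (N - (k*(n*(n-1)/2) + m*n)) then 1 else 0)

/-!
The `n`-th summand contributes to the coefficient of `q^N` exactly when `N = jℓ` for a pair
`(ℓ, j)` of one of two kinds: for odd `n = ℓ`, with `j ≥ m + k(ℓ-1)/2`; for even `n = 2ℓ`,
with `j` odd and `j ≥ 2m + k(2ℓ-1)` (this uses that `k` is odd). So `h_{m,k}(N) = #O - #E` for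
the two corresponding sets `O`, `E` of divisor pairs.

Let `S` be the set of all pairs with `jℓ = N` and `j ≥ m + k(ℓ-1)/2`, and `T ⊆ S` the pairs
with `j < 2m + k(2ℓ-1)`, counted on the right-hand side. Among the pairs of `S \ T`, those with
`j` odd form `E`, and those with `j` even correspond to the pairs of `S` with `ℓ` even under
`(ℓ, j) ↦ (2ℓ, j/2)`. Counting `S` once by the parity of `ℓ` and once along this splitting gives
`#O = #T + #E`.
-/

open Finset

theorem Nat.mul_le_and_mul_dvd_sub_iff {n a d N : ℕ} :
    n * a ≤ N ∧ d * n ∣ N - n * a ↔ ∃ j, j * n = N ∧ a ≤ j ∧ d ∣ j - a := by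
  constructor
  · rintro ⟨hle, c, hc⟩
    refine ⟨a + d * c, ?_, Nat.le_add_right a _, ⟨c, by omega⟩⟩
    have hN : N = n * a + d * n * c := by omega
    rw [hN]; ring
  · rintro ⟨j, rfl, haj, c, hc⟩
    have hsub : j * n - n * a = d * n * c := by
      rw [mul_comm n a, ← Nat.sub_mul, hc]; ring
    exact ⟨by rw [mul_comm n a]; exact Nat.mul_le_mul_right n haj, hsub ▸ dvd_mul_right _ _⟩

section
variable {m k N : ℕ}

def Contributes (m k N n : ℕ) : Prop :=
  k*(n*(n-1)/2) + m*n ≤ N ∧ n ∣ N - (k*(n*(n-1)/2) + m*n)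

theorem contributes_iff_of_odd {n : ℕ} (hn : Odd n) :
    Contributes m k N n ↔ ∃ j, j * n = N ∧ 2*m + k*(n-1) ≤ 2*j := by
  obtain ⟨c, hc⟩ := hn
  have hexp : k*(n*(n-1)/2) + m*n = n * (k*c + m) := by
    rw [show n - 1 = 2 * c by omega, mul_left_comm, Nat.mul_div_cancel_left _ two_pos]
    ring
  have hdiv := Nat.mul_le_and_mul_dvd_sub_iff (n := n) (a := k*c + m) (d := 1) (N := N)
  simp only [one_mul, one_dvd, and_true] at hdiv
  rw [Contributes, hexp, hdiv]
  refine exists_congr fun j => and_congr_right fun _ => ?_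
  rw [show n - 1 = 2 * c by omega, mul_left_comm]
  omega

theorem contributes_two_mul_iff {l : ℕ} (hk : Odd k) (hl : 0 < l) :
    Contributes m k N (2*l) ↔ ∃ j, j * l = N ∧ Odd j ∧ 2*m + k*(2*l-1) ≤ j := by
  have hexp : k*(2*l*(2*l-1)/2) + m*(2*l) = l * (k*(2*l-1) + 2*m) := by
    rw [mul_assoc, Nat.mul_div_cancel_left _ two_pos]; ring
  have hodd : Odd (k*(2*l-1) + 2*m) :=
    (hk.mul (Nat.odd_iff.mpr (by omega))).add_even (even_two_mul m)
  rw [Contributes, hexp, Nat.mul_le_and_mul_dvd_sub_iff (d := 2)]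
  refine exists_congr fun j => and_congr_right fun _ => ?_
  rw [Nat.odd_iff] at hodd ⊢
  omega

theorem hcoef_eq_card_sub_card :
    hcoef m k N = #((Icc 1 (2*N+2)).filter (fun n => Odd n ∧ Contributes m k N n))
      - #((Icc 1 (2*N+2)).filter (fun n => Even n ∧ Contributes m k N n)) := by
  rw [hcoef, card_filter, card_filter]
  push_cast
  rw [← sum_sub_distrib]
  refine sum_congr rfl fun n hn => ?_
  have hn1 : 1 ≤ n := (mem_Icc.mp hn).1
  rcases Nat.even_or_odd n with he | ho
  · have : Odd (n-1) := Nat.Even.sub_odd hn1 he odd_one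
    simp [Contributes, this.neg_one_pow, he, Nat.not_odd_iff_even.mpr he, apply_ite Neg.neg]
  · have : Even (n-1) := Nat.Odd.sub_odd ho odd_one
    simp [Contributes, this.neg_one_pow, ho, Nat.not_even_iff_odd.mpr ho]

-- The box only makes the set finite: `mem_admissiblePairs` shows it is no restriction.
def admissiblePairs (m k N : ℕ) : Finset (ℕ × ℕ) :=
  (Icc 1 (N+1) ×ˢ Icc 0 N).filter (fun p => p.2 * p.1 = N ∧ 2*m + k*(p.1 - 1) ≤ 2*p.2)

theorem fst_le_of_mem_admissiblePairs {p : ℕ × ℕ} (hp : p ∈ admissiblePairs m k N) :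
    p.1 ≤ N + 1 :=
  (mem_Icc.mp (mem_product.mp (mem_filter.mp hp).1).1).2

theorem mem_admissiblePairs (hk : 0 < k) {p : ℕ × ℕ} :
    p ∈ admissiblePairs m k N ↔ p.2 * p.1 = N ∧ 0 < p.1 ∧ 2*m + k*(p.1 - 1) ≤ 2*p.2 := by
  obtain ⟨l, j⟩ := p
  simp only [admissiblePairs, mem_filter, mem_product, mem_Icc]
  constructor
  · rintro ⟨⟨⟨hl, -⟩, -⟩, hN, hA⟩
    exact ⟨hN, hl, hA⟩
  · rintro ⟨rfl, hl, hA⟩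
    have : l - 1 ≤ k * (l - 1) := Nat.le_mul_of_pos_left _ hk
    have : j ≤ j * l := Nat.le_mul_of_pos_right _ hl
    refine ⟨⟨⟨hl, ?_⟩, Nat.zero_le _, this⟩, rfl, hA⟩
    rcases Nat.eq_zero_or_pos j with rfl | hj
    · omega
    · have := Nat.le_mul_of_pos_left l hj
      omega

theorem injOn_fst_admissiblePairs : Set.InjOn Prod.fst (admissiblePairs m k N : Set (ℕ × ℕ)) := by
  rintro ⟨l, j⟩ hp ⟨l', j'⟩ hp' (rfl : l = l')
  simp only [mem_coe, admissiblePairs, mem_filter, mem_product, mem_Icc] at hp hp'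
  have hj : j * l = j' * l := hp.2.1.trans hp'.2.1.symm
  rw [Nat.eq_of_mul_eq_mul_right hp.1.1.1 hj]

theorem card_odd_contributing (hk : 0 < k) :
    #((Icc 1 (2*N+2)).filter (fun n => Odd n ∧ Contributes m k N n))
      = #((admissiblePairs m k N).filter (fun p => Odd p.1)) := by
  rw [← card_image_of_injOn (injOn_fst_admissiblePairs.mono (filter_subset _ _))]
  congr 1
  ext n
  simp only [mem_image, mem_filter, Prod.exists, mem_Icc]
  constructor
  · rintro ⟨⟨hn, -⟩, hodd, hC⟩
    obtain ⟨j, hN, hA⟩ := (contributes_iff_of_odd hodd).mp hC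
    exact ⟨n, j, ⟨(mem_admissiblePairs hk).mpr ⟨hN, hn, hA⟩, hodd⟩, rfl⟩
  · rintro ⟨l, j, ⟨hmem, hl⟩, rfl⟩
    have hle := fst_le_of_mem_admissiblePairs hmem
    obtain ⟨hN, hpos, hA⟩ := (mem_admissiblePairs hk).mp hmem
    exact ⟨⟨hpos, by omega⟩, hl, (contributes_iff_of_odd hl).mpr ⟨j, hN, hA⟩⟩

theorem card_even_contributing (hk : Odd k) :
    #((Icc 1 (2*N+2)).filter (fun n => Even n ∧ Contributes m k N n))
      = #(((admissiblePairs m k N).filter (fun p => 2*m + k*(2*p.1 - 1) ≤ p.2)).filter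
          (fun p => Odd p.2)) := by
  have hinj : Set.InjOn (fun p : ℕ × ℕ => 2 * p.1) (admissiblePairs m k N : Set (ℕ × ℕ)) :=
    fun p hp p' hp' h => injOn_fst_admissiblePairs hp hp' (by simpa using h)
  rw [← card_image_of_injOn (hinj.mono fun p hp => (mem_filter.mp (mem_filter.mp hp).1).1)]
  congr 1
  ext n
  simp only [mem_image, mem_filter, Prod.exists, mem_Icc]
  constructor
  · rintro ⟨⟨hn, -⟩, heven, hC⟩
    obtain ⟨l, rfl⟩ := heven.two_dvd
    have hpos : 0 < l := by omega
    obtain ⟨j, hN, hj, hB⟩ := (contributes_two_mul_iff hk hpos).mp hC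
    have : k * (l - 1) ≤ k * (2*l - 1) := Nat.mul_le_mul_left k (by omega)
    refine ⟨l, j, ⟨⟨(mem_admissiblePairs hk.pos).mpr ⟨hN, hpos, ?_⟩, hB⟩, hj⟩, rfl⟩
    dsimp only
    omega
  · rintro ⟨l, j, ⟨⟨hmem, hB⟩, hj⟩, rfl⟩
    have hle := fst_le_of_mem_admissiblePairs hmem
    obtain ⟨hN, hpos, -⟩ := (mem_admissiblePairs hk.pos).mp hmem
    exact ⟨⟨by omega, by omega⟩, even_two_mul l,
      (contributes_two_mul_iff hk hpos).mpr ⟨j, hN, hj, hB⟩⟩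

theorem card_even_snd_eq_card_even_fst (hk : 0 < k) :
    #(((admissiblePairs m k N).filter (fun p => 2*m + k*(2*p.1 - 1) ≤ p.2)).filter
        (fun p => ¬ Odd p.2))
      = #((admissiblePairs m k N).filter (fun p => ¬ Odd p.1)) := by
  refine card_nbij' (fun p => (2 * p.1, p.2 / 2)) (fun p => (p.1 / 2, 2 * p.2)) ?_ ?_ ?_ ?_
  · rintro ⟨l, j⟩ hp
    simp only [mem_coe, mem_filter, mem_admissiblePairs hk, Nat.not_odd_iff_even] at hp ⊢
    obtain ⟨⟨⟨hN, hl, -⟩, hB⟩, hj⟩ := hp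
    obtain ⟨t, rfl⟩ := hj.two_dvd
    rw [Nat.mul_div_cancel_left _ two_pos]
    exact ⟨⟨by rw [← hN]; ring, by omega, by omega⟩, even_two_mul l⟩
  · rintro ⟨l, j⟩ hp
    simp only [mem_coe, mem_filter, mem_admissiblePairs hk, Nat.not_odd_iff_even] at hp ⊢
    obtain ⟨⟨hN, hl, hA⟩, hl2⟩ := hp
    obtain ⟨t, rfl⟩ := hl2.two_dvd
    rw [Nat.mul_div_cancel_left _ two_pos]
    have : k * (t - 1) ≤ k * (2*t - 1) := Nat.mul_le_mul_left k (by omega)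
    exact ⟨⟨⟨by rw [← hN]; ring, by omega, by omega⟩, hA⟩, even_two_mul j⟩
  · rintro ⟨l, j⟩ hp
    simp only [mem_coe, mem_filter, Nat.not_odd_iff_even] at hp
    obtain ⟨t, rfl⟩ := hp.2.two_dvd
    simp
  · rintro ⟨l, j⟩ hp
    simp only [mem_coe, mem_filter, Nat.not_odd_iff_even] at hp
    obtain ⟨t, rfl⟩ := hp.2.two_dvd
    simp

theorem card_odd_fst_eq_add (hk : 0 < k) :
    #((admissiblePairs m k N).filter (fun p => Odd p.1))
      = #((admissiblePairs m k N).filter (fun p => p.2 < 2*m + k*(2*p.1 - 1)))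
        + #(((admissiblePairs m k N).filter (fun p => 2*m + k*(2*p.1 - 1) ≤ p.2)).filter
            (fun p => Odd p.2)) := by
  have hS := card_filter_add_card_filter_not (s := admissiblePairs m k N) (fun p => Odd p.1)
  have hT := card_filter_add_card_filter_not (s := admissiblePairs m k N)
    (fun p => p.2 < 2*m + k*(2*p.1 - 1))
  have hE := card_filter_add_card_filter_not
    (s := (admissiblePairs m k N).filter (fun p => 2*m + k*(2*p.1 - 1) ≤ p.2)) (fun p => Odd p.2)
  simp only [not_lt] at hT
  have hdouble := card_even_snd_eq_card_even_fst (m := m) (N := N) hk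
  omega

end

theorem stmt0_general (m k : ℕ) (hk : Odd k) (N : ℕ) :
    hcoef m k N =
      (((Finset.Icc 1 (N+1)) ×ˢ (Finset.Icc 0 N)).filter
        (fun p => p.2 * p.1 = N ∧ 2*m + k*(p.1 - 1) ≤ 2*p.2 ∧
          p.2 < 2*m + k*(2*p.1 - 1))).card := by
  have htarget : ((Icc 1 (N+1)) ×ˢ (Icc 0 N)).filter
      (fun p => p.2 * p.1 = N ∧ 2*m + k*(p.1 - 1) ≤ 2*p.2 ∧ p.2 < 2*m + k*(2*p.1 - 1))
        = (admissiblePairs m k N).filter (fun p => p.2 < 2*m + k*(2*p.1 - 1)) := by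
    ext p
    simp only [admissiblePairs, mem_filter, and_assoc]
  rw [htarget, hcoef_eq_card_sub_card, card_odd_contributing hk.pos, card_even_contributing hk,
    card_odd_fst_eq_add hk.pos]
  push_cast
  ring

theorem stmt0 (m k : ℕ) (hk : Odd k) (hk1 : 1 ≤ k) (N : ℕ) :
    hcoef m k N =
      (((Finset.Icc 1 (N+1)) ×ˢ (Finset.Icc 0 N)).filter
        (fun p => p.2 * p.1 = N ∧ 2*m + k*(p.1 - 1) ≤ 2*p.2 ∧
          p.2 < 2*m + k*(2*p.1 - 1))).card :=
  stmt0_general m k hk N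
end

section
/- Let m ≥ 0 be an integer, k ≥ 1 an odd integer, and define h_{m,k}(n) as the n-th coefficient of the q-series ∑_{n≥1} (-1)^{n-1} q^{k·n(n-1)/2 + mn} / (1 - q^n). Then for every n ≥ 1, h_{m,k}(n) equals the number of divisors d of n satisfying u_{m,k}(n) < 2kd ≤ 2·u_{m,k}(n), where u_{m,k}(n) = √(2kn + (m - k/2)²) − (m − k/2). -/
open scoped Classical

/-- `u m k n = √(2kn + (m - k/2)²) − (m − k/2)`. -/
noncomputable def u (m k n : ℕ) : ℝ :=
  Real.sqrt (2*k*n + ((m : ℝ) - k/2)^2) - ((m : ℝ) - k/2)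

/-- `hd m k n` is the number of divisors `d` of `n` with `u m k n < 2kd ≤ 2·u m k n`. -/
noncomputable def hd (m k n : ℕ) : ℕ :=
  (n.divisors.filter (fun d => u m k n < ((2*k*d : ℕ) : ℝ) ∧ ((2*k*d : ℕ) : ℝ) ≤ 2 * u m k n)).card


/-!
Write `E(n) = k·n(n-1)/2 + m·n`. The `n`-th summand contributes to `q^N` iff `E(n) ≤ N` and
`n ∣ N - E(n)`. For odd `n` we have `n ∣ E(n)`, so this says `n ∣ N`; for `n = 2t` we have
`E(n) ≡ t [MOD 2t]` because `k` is odd, so it says `n ∣ 2N` but `n ∤ N`. Hence `h(N)` is the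
number of odd divisors `d` of `N` with `E(d) ≤ N`, minus the number of divisors of `2N` not
dividing `N` with the same property.

On the other side `k·d ≤ u(N)` iff `E(d) ≤ N`, so the divisors counted are those with
`E(d) ≤ N < E(2d)`. As `E` is monotone, `d ↦ 2d` matches `{d ∣ N : E(2d) ≤ N}` with the even
divisors `e` of `2N` with `E(e) ≤ N`, and the two counts agree.
-/

open Finset

theorem Odd.dvd_of_dvd_two_mul {e N : ℕ} (he : Odd e) (h : e ∣ 2 * N) : e ∣ N :=
  (Nat.coprime_two_right.2 he).dvd_of_dvd_mul_left h

theorem Nat.modEq_two_mul_iff {t N : ℕ} (ht : 0 < t) :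
    t ≡ N [MOD 2 * t] ↔ 2 * t ∣ 2 * N ∧ ¬ 2 * t ∣ N := by
  rw [Nat.mul_dvd_mul_iff_left two_pos]
  constructor
  · intro h
    have hr : N % (2 * t) = t := Eq.trans h.symm (Nat.mod_eq_of_lt (by omega))
    refine ⟨Dvd.intro (2 * (N / (2 * t)) + 1) ?_, fun h2 => ?_⟩
    · have := Nat.div_add_mod N (2 * t)
      rw [hr] at this
      linear_combination this
    · rw [Nat.dvd_iff_mod_eq_zero, hr] at h2
      omega
  · rintro ⟨⟨c, rfl⟩, hc⟩
    obtain ⟨c, rfl⟩ : Odd c :=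
      Nat.not_even_iff_odd.1 fun ⟨r, hr⟩ => hc ⟨r, by rw [hr]; ring⟩
    rw [Nat.ModEq, show t * (2 * c + 1) = t + 2 * t * c by ring, Nat.add_mul_mod_self_left]

theorem Nat.card_filter_divisors_and_not_two_mul {P : ℕ → Prop} [DecidablePred P]
    (hP : Antitone P) (N : ℕ) :
    (#{d ∈ N.divisors | P d ∧ ¬ P (2 * d)} : ℤ) =
      #{d ∈ N.divisors | Odd d ∧ P d} - #{d ∈ (2 * N).divisors \ N.divisors | P d} := by
  have hsub : {d ∈ N.divisors | P (2 * d)} ⊆ {d ∈ N.divisors | P d} :=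
    monotone_filter_right _ fun d _ => hP (Nat.le_mul_of_pos_left d two_pos)
  have hdouble : #{d ∈ N.divisors | P (2 * d)} = #{e ∈ (2 * N).divisors | Even e ∧ P e} := by
    refine card_nbij' (2 * ·) (· / 2) ?_ ?_ (fun d _ => by simp) ?_ <;>
      intro e he <;> simp only [coe_filter, Set.mem_ofPred_eq, Nat.mem_divisors] at he ⊢
    · simp_all [Nat.mul_dvd_mul_iff_left]
    · obtain ⟨c, rfl⟩ := he.2.1.two_dvd
      simp_all [Nat.mul_dvd_mul_iff_left]
    · obtain ⟨c, rfl⟩ := he.2.1.two_dvd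
      simp
  have hevens : #{e ∈ (2 * N).divisors | Even e ∧ P e} =
      #{d ∈ N.divisors | Even d ∧ P d} + #{d ∈ (2 * N).divisors \ N.divisors | P d} := by
    rw [← card_union_of_disjoint (disjoint_filter_filter disjoint_sdiff)]
    congr 1
    ext e
    by_cases he : e ∣ N
    · simp [he, Dvd.dvd.mul_left he]
    · simpa [he] using fun h2 _ _ => Nat.not_odd_iff_even.1 fun ho => he (ho.dvd_of_dvd_two_mul h2)
  have hsplit : #{d ∈ N.divisors | Odd d ∧ P d} + #{d ∈ N.divisors | Even d ∧ P d} =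
      #{d ∈ N.divisors | P d} := by
    rw [← card_filter_add_card_filter_not (s := {d ∈ N.divisors | P d}) Odd]
    simp only [filter_filter, Nat.not_odd_iff_even, and_comm]
  rw [filter_and_not, card_sdiff_of_subset hsub, Nat.cast_sub (card_le_card hsub), hdouble,
    ← hsplit, hevens]
  push_cast
  ring

def halfAppellExponent (m k n : ℕ) : ℕ := k * (n * (n - 1) / 2) + m * n

namespace halfAppellExponent

variable {m k N : ℕ}

theorem monotone : Monotone (halfAppellExponent m k) := by
  intro a b hab
  unfold halfAppellExponent
  gcongr

theorem two_mul (n : ℕ) : 2 * halfAppellExponent m k n = k * (n * (n - 1)) + 2 * m * n := by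
  rw [halfAppellExponent, mul_add, mul_left_comm,
    Nat.two_mul_div_two_of_even (Nat.even_mul_pred_self n)]
  ring

theorem dvd_of_odd {n : ℕ} (hn : Odd n) : n ∣ halfAppellExponent m k n := by
  obtain ⟨r, rfl⟩ := hn
  refine dvd_add (Dvd.intro_left (k * r) ?_) (Dvd.intro_left m rfl)
  rw [Nat.add_sub_cancel, mul_left_comm, Nat.mul_div_cancel_left _ two_pos]
  ring

theorem two_mul_modEq (hk : Odd k) (t : ℕ) :
    halfAppellExponent m k (2 * t) ≡ t [MOD 2 * t] := by
  rcases Nat.eq_zero_or_pos t with rfl | ht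
  · rfl
  obtain ⟨s, hs⟩ := hk.mul (Nat.Even.sub_odd (by omega) (even_two_mul t) odd_one)
  have : halfAppellExponent m k (2 * t) = t + 2 * t * (s + m) := by
    rw [halfAppellExponent, mul_assoc 2 t, Nat.mul_div_cancel_left _ two_pos, mul_left_comm, hs]
    ring
  rw [this, Nat.ModEq, Nat.add_mul_mod_self_left]

theorem two_mul_dvd_sub_iff (hk : Odd k) {t : ℕ} (ht : 0 < t)
    (hE : halfAppellExponent m k (2 * t) ≤ N) :
    2 * t ∣ N - halfAppellExponent m k (2 * t) ↔ 2 * t ∣ 2 * N ∧ ¬ 2 * t ∣ N := by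
  rw [← Nat.modEq_iff_dvd' hE, ← Nat.modEq_two_mul_iff ht]
  exact ⟨(two_mul_modEq hk t).symm.trans, (two_mul_modEq hk t).trans⟩

theorem neg_one_pow_mul_ite_eq (hk : Odd k) (hN : N ≠ 0) {n : ℕ} (hn : 0 < n) :
    (-1 : ℤ) ^ (n - 1) *
        (if halfAppellExponent m k n ≤ N ∧ n ∣ N - halfAppellExponent m k n then 1 else 0) =
      (if n ∈ {d ∈ N.divisors | Odd d ∧ halfAppellExponent m k d ≤ N} then 1 else 0) -
        (if n ∈ {d ∈ (2 * N).divisors \ N.divisors | halfAppellExponent m k d ≤ N} then 1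
          else 0) := by
  by_cases hE : halfAppellExponent m k n ≤ N
  swap
  · simp [hE]
  rcases Nat.even_or_odd n with hev | hodd
  · rw [Odd.neg_one_pow (Nat.Even.sub_odd hn hev odd_one)]
    obtain ⟨t, rfl⟩ := hev.two_dvd
    simp only [hE, two_mul_dvd_sub_iff hk (by omega) hE, true_and]
    simp [hE, hN, Nat.not_odd_iff_even.2 hev]
    split_ifs <;> simp
  · rw [Even.neg_one_pow (Nat.Odd.sub_odd hodd odd_one)]
    have : ¬ (n ∣ 2 * N ∧ ¬ n ∣ N) := fun h => h.2 (hodd.dvd_of_dvd_two_mul h.1)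
    simp [hE, Nat.dvd_sub_iff_left hE (dvd_of_odd hodd), hN, hodd, this]

end halfAppellExponent

theorem hcoef_eq_card_sub_card_s1 {m k N : ℕ} (hk : Odd k) (hN : N ≠ 0) :
    hcoef m k N = #{d ∈ N.divisors | Odd d ∧ halfAppellExponent m k d ≤ N} -
      #{d ∈ (2 * N).divisors \ N.divisors | halfAppellExponent m k d ≤ N} := by
  have hIcc : (2 * N).divisors ⊆ Icc 1 (2 * N + 2) := fun d hd =>
    mem_Icc.2 ⟨Nat.pos_of_mem_divisors hd, (Nat.divisor_le hd).trans (by omega)⟩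
  have hsub : N.divisors ⊆ (2 * N).divisors :=
    Nat.divisors_subset_of_dvd (by omega) (dvd_mul_left N 2)
  calc hcoef m k N = ∑ n ∈ Icc 1 (2 * N + 2),
      ((if n ∈ {d ∈ N.divisors | Odd d ∧ halfAppellExponent m k d ≤ N} then 1 else 0) -
        (if n ∈ {d ∈ (2 * N).divisors \ N.divisors | halfAppellExponent m k d ≤ N} then 1
          else 0)) :=
        sum_congr rfl fun n hn => halfAppellExponent.neg_one_pow_mul_ite_eq hk hN (mem_Icc.1 hn).1
    _ = _ := by
      rw [sum_sub_distrib, sum_ite_mem, sum_ite_mem,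
        inter_eq_right.2 ((filter_subset _ _).trans (hsub.trans hIcc)),
        inter_eq_right.2 ((filter_subset _ _).trans (sdiff_subset.trans hIcc))]
      simp

theorem natCast_mul_le_u_iff {m k N x : ℕ} (hk : 0 < k) (hx : 0 < x) :
    ((k * x : ℕ) : ℝ) ≤ u m k N ↔ halfAppellExponent m k x ≤ N := by
  have hk' : (1 : ℝ) ≤ k := by exact_mod_cast hk
  have hx' : (1 : ℝ) ≤ x := by exact_mod_cast hx
  have hpos : 0 ≤ (k * x : ℝ) + (m - k / 2) := by nlinarith
  rw [u, le_sub_iff_add_le, Nat.cast_mul, Real.le_sqrt hpos (by positivity),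
    ← Nat.mul_le_mul_left_iff two_pos, halfAppellExponent.two_mul, ← Nat.cast_le (α := ℝ)]
  push_cast [Nat.cast_sub hx]
  constructor <;> intro h <;> nlinarith

theorem filter_divisors_u_lt_eq {m k N : ℕ} (hk : 0 < k) :
    {d ∈ N.divisors |
        u m k N < ((2 * k * d : ℕ) : ℝ) ∧ ((2 * k * d : ℕ) : ℝ) ≤ 2 * u m k N} =
      {d ∈ N.divisors |
        halfAppellExponent m k d ≤ N ∧ ¬ halfAppellExponent m k (2 * d) ≤ N} := by
  refine filter_congr fun d hd => ?_
  have hd : 0 < d := Nat.pos_of_mem_divisors hd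
  rw [and_comm, ← natCast_mul_le_u_iff hk hd, ← natCast_mul_le_u_iff hk (by omega), not_le]
  push_cast
  constructor <;> rintro ⟨h1, h2⟩ <;> constructor <;> linarith

theorem stmt1_general (m k : ℕ) (hk : Odd k) (n : ℕ) (hn : 1 ≤ n) :
    hcoef m k n =
      ((n.divisors.filter
        (fun d => u m k n < ((2*k*d : ℕ) : ℝ) ∧ ((2*k*d : ℕ) : ℝ) ≤ 2 * u m k n)).card : ℤ) := by
  rw [filter_divisors_u_lt_eq hk.pos,
    Nat.card_filter_divisors_and_not_two_mul fun _ _ hxy h =>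
      (halfAppellExponent.monotone hxy).trans h,
    hcoef_eq_card_sub_card_s1 hk (by omega)]

theorem stmt1 (m k : ℕ) (hk : Odd k) (hk1 : 1 ≤ k) (n : ℕ) (hn : 1 ≤ n) :
    hcoef m k n =
      ((n.divisors.filter
        (fun d => u m k n < ((2*k*d : ℕ) : ℝ) ∧ ((2*k*d : ℕ) : ℝ) ≤ 2 * u m k n)).card : ℤ) :=
  stmt1_general m k hk n hn
end

section
/- For any integer m ≥ 0, any odd integer k ≥ 1, and all n ≥ 0, the coefficient h_{m,k}(n) of q^n in ∑_{n≥1} (-1)^{n-1} q^{k·n(n-1)/2 + mn} / (1 - q^n) is nonnegative. -/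
/-!
Write `e(n) = k·n(n-1)/2 + m·n`. The index `n` contributes `(-1)^(n-1)` to the coefficient of
`q^N` exactly when `N = e(n) + n·t` for some `t ≥ 0`. For even `n = 2r` this reads `N = r·D` with
`D = k(2r-1) + 2m + 2t`, which is odd because `k` is. Hence `r = 2^v·ν` with `v = v₂(N)` and `ν`
odd, and `ν` is itself a (positive) contributor since `ν ∣ N` and `e(ν) ≤ ν·D ≤ N`. The map
`ν ↦ 2^(v+1)·ν` therefore sends odd contributors onto all even ones, so the negative terms are
outnumbered by the positive ones.
-/

open scoped Classical

open Finset

def appellExponent (m k n : ℕ) : ℕ := k * (n * (n - 1) / 2) + m * n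

def IsHalfAppellTerm (m k N n : ℕ) : Prop :=
  appellExponent m k n ≤ N ∧ n ∣ N - appellExponent m k n

instance (m k N : ℕ) : DecidablePred (IsHalfAppellTerm m k N) :=
  fun _ => inferInstanceAs (Decidable (_ ∧ _))

lemma isHalfAppellTerm_iff {m k N n : ℕ} :
    IsHalfAppellTerm m k N n ↔ ∃ t, N = appellExponent m k n + n * t := by
  constructor
  · rintro ⟨hle, t, ht⟩
    exact ⟨t, by omega⟩
  · rintro ⟨t, rfl⟩
    simp [IsHalfAppellTerm]

lemma appellExponent_two_mul_add_one (m k s : ℕ) :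
    appellExponent m k (2 * s + 1) = (2 * s + 1) * (k * s + m) := by
  have : (2 * s + 1) * (2 * s + 1 - 1) / 2 = (2 * s + 1) * s := by
    rw [Nat.add_sub_cancel, mul_left_comm, Nat.mul_div_cancel_left _ two_pos]
  rw [appellExponent, this]
  ring

lemma appellExponent_two_mul (m k r : ℕ) :
    appellExponent m k (2 * r) = r * (k * (2 * r - 1) + 2 * m) := by
  rw [appellExponent, mul_assoc, Nat.mul_div_cancel_left _ two_pos]
  ring

lemma padicValNat_two_pow_mul_of_odd {d : ℕ} (hd : Odd d) (a : ℕ) :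
    padicValNat 2 (2 ^ a * d) = a := by
  rw [padicValNat.mul (by positivity) (by rintro rfl; simp at hd), padicValNat.prime_pow,
    padicValNat.eq_zero_of_not_dvd (by simpa [← even_iff_two_dvd] using hd), add_zero]

lemma isHalfAppellTerm_of_odd {m k N s : ℕ} (hN : 2 * s + 1 ∣ N)
    (hle : (2 * s + 1) * (k * s + m) ≤ N) : IsHalfAppellTerm m k N (2 * s + 1) := by
  rw [IsHalfAppellTerm, appellExponent_two_mul_add_one]
  exact ⟨hle, Nat.dvd_sub hN (dvd_mul_right _ _)⟩

lemma exists_odd_of_isHalfAppellTerm_two_mul {m k N r : ℕ} (hk : Odd k) (hr : r ≠ 0)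
    (h : IsHalfAppellTerm m k N (2 * r)) :
    ∃ ν, Odd ν ∧ IsHalfAppellTerm m k N ν ∧ 2 * r = 2 ^ (padicValNat 2 N + 1) * ν := by
  obtain ⟨t, hN⟩ := isHalfAppellTerm_iff.mp h
  rw [appellExponent_two_mul] at hN
  set D := k * (2 * r - 1) + 2 * m + 2 * t
  have hND : N = r * D := by rw [hN]; ring
  have hD : Odd D := by
    have h2r : Odd (2 * r - 1) := ⟨r - 1, by omega⟩
    exact (hk.mul h2r).add_even (even_two_mul m) |>.add_even (even_two_mul t)
  obtain ⟨a, ν, hν, rfl⟩ := Nat.exists_eq_two_pow_mul_odd hr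
  have hNa : N = 2 ^ a * (ν * D) := by rw [hND]; ring
  have hval : padicValNat 2 N = a := by rw [hNa, padicValNat_two_pow_mul_of_odd (hν.mul hD)]
  refine ⟨ν, hν, ?_, by rw [hval]; ring⟩
  obtain ⟨s, rfl⟩ := hν
  refine isHalfAppellTerm_of_odd ⟨2 ^ a * D, by rw [hNa]; ring⟩ ?_
  have hs : s ≤ 2 * (2 ^ a * (2 * s + 1)) - 1 := by
    have := Nat.le_mul_of_pos_left (2 * s + 1) (Nat.two_pow_pos a)
    omega
  calc (2 * s + 1) * (k * s + m) ≤ (2 * s + 1) * D := by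
        gcongr
        have := Nat.mul_le_mul_left k hs
        omega
    _ ≤ (2 * s + 1) * (2 ^ a * D) := by gcongr; exact Nat.le_mul_of_pos_left D (Nat.two_pow_pos a)
    _ = N := by rw [hNa]; ring

def halfAppellTerms (m k N : ℕ) : Finset ℕ := {n ∈ Icc 1 (2 * N + 2) | IsHalfAppellTerm m k N n}

lemma hcoef_eq_sum_halfAppellTerms (m k N : ℕ) :
    hcoef m k N = ∑ n ∈ halfAppellTerms m k N, (-1 : ℤ) ^ (n - 1) := by
  simp only [hcoef, halfAppellTerms, sum_filter, mul_ite, mul_one, mul_zero]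
  rfl

lemma sum_neg_one_pow_pred {s : Finset ℕ} (hs : 0 ∉ s) :
    ∑ n ∈ s, (-1 : ℤ) ^ (n - 1) = #{n ∈ s | Odd n} - #{n ∈ s | Even n} := by
  rw [← sum_filter_add_sum_filter_not s Odd, sub_eq_add_neg]
  congr 1
  · rw [sum_congr rfl fun n hn => (Nat.Odd.sub_odd (mem_filter.mp hn).2 odd_one).neg_one_pow,
      sum_const, nsmul_one]
  · have hodd : ∀ n ∈ {n ∈ s | ¬Odd n}, Odd (n - 1) := fun n hn => by
      obtain ⟨hns, hn⟩ := mem_filter.mp hn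
      have : n ≠ 0 := by rintro rfl; exact hs hns
      rw [Nat.not_odd_iff_even] at hn
      exact Nat.Even.sub_odd (by omega) hn odd_one
    rw [sum_congr rfl fun n hn => (hodd n hn).neg_one_pow, sum_const, smul_neg, nsmul_one]
    simp only [Nat.not_odd_iff_even]

lemma card_even_halfAppellTerms_le_card_odd (m k N : ℕ) (hk : Odd k) :
    #{n ∈ halfAppellTerms m k N | Even n} ≤ #{n ∈ halfAppellTerms m k N | Odd n} := by
  refine card_le_card_of_surjOn (fun ν => 2 ^ (padicValNat 2 N + 1) * ν) ?_
  intro j hj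
  rw [mem_coe, mem_filter, halfAppellTerms, mem_filter, mem_Icc] at hj
  obtain ⟨⟨⟨hj1, hjN⟩, hterm⟩, r, rfl⟩ := hj
  rw [← two_mul] at hterm ⊢
  obtain ⟨ν, hν, hνterm, hrν⟩ := exists_odd_of_isHalfAppellTerm_two_mul hk (by omega) hterm
  have : ν ≤ 2 * r := hrν ▸ Nat.le_mul_of_pos_left ν (Nat.two_pow_pos _)
  refine ⟨ν, ?_, hrν.symm⟩
  rw [mem_coe, mem_filter, halfAppellTerms, mem_filter, mem_Icc]
  exact ⟨⟨⟨hν.pos, by omega⟩, hνterm⟩, hν⟩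

theorem stmt2_general (m k : ℕ) (hk : Odd k) (n : ℕ) :
    0 ≤ hcoef m k n := by
  rw [hcoef_eq_sum_halfAppellTerms, sum_neg_one_pow_pred (by simp [halfAppellTerms]), sub_nonneg,
    Nat.cast_le]
  exact card_even_halfAppellTerms_le_card_odd m k n hk

theorem stmt2 (m k : ℕ) (hk : Odd k) (hk1 : 1 ≤ k) (n : ℕ) :
    0 ≤ hcoef m k n :=
  stmt2_general m k hk n
end

section
/- For all integers m ≥ 0, n ≥ 0, and all odd integers k ≥ 1, we have h_{m,k}(2n) ≥ h_{m,k}(n), where h_{m,k}(n) is the number of divisors d of n with u_{m,k}(n) < 2kd ≤ 2·u_{m,k}(n), u_{m,k}(n) = √(2kn + (m - k/2)²) − (m − k/2), and h_{m,k}(0) = 0. -/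
open scoped Classical

/-!
Both ends of the window move by at most a factor of two: `u(n) ≤ u(2n) ≤ 2 u(n)`, the second
inequality because `t ↦ √(t + c²) - c` is concave and nonnegative at `t = 0`. A divisor `d` of `n`
with `2kd ∈ (u(n), 2u(n)]` is then sent to the divisor `d` of `2n` if `2kd > u(2n)`, and to `2d`
otherwise. The image is counted by `h(2n)`, and the map is injective because `2kd` and `4kd'` cannot
both lie in `(u(n), 2u(n)]`.
-/

open Finset

theorem card_filter_window_le_card_filter_window {α : Type*} {φ : α → α} (hφ : φ.Injective)
    {g : α → ℝ} (hg : ∀ a, g (φ a) = 2 * g a) {U V : ℝ} (hUV : U ≤ V) (hVU : V ≤ 2 * U)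
    {s t : Finset α} (hst : ∀ a ∈ s, a ∈ t ∧ φ a ∈ t) :
    #{a ∈ s | U < g a ∧ g a ≤ 2 * U} ≤ #{a ∈ t | V < g a ∧ g a ≤ 2 * V} := by
  refine card_le_card_of_injOn (fun a => if V < g a then a else φ a) ?_ ?_
  · intro a ha
    simp only [coe_filter, Set.mem_ofPred_eq] at ha ⊢
    obtain ⟨has, hUa, haU⟩ := ha
    split_ifs with hVa
    · exact ⟨(hst a has).1, hVa, by linarith⟩
    · rw [hg]
      exact ⟨(hst a has).2, by linarith, by linarith⟩
  · intro a ha b hb hab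
    simp only [coe_filter, Set.mem_ofPred_eq] at ha hb
    dsimp only at hab
    split_ifs at hab with hVa hVb hVb
    · exact hab
    · have := hg b
      rw [← hab] at this
      linarith [ha.2.2, hb.2.1]
    · have := hg a
      rw [hab] at this
      linarith [ha.2.1, hb.2.2]
    · exact hφ hab

theorem Real.sqrt_two_mul_add_sq_sub_le (a c : ℝ) (ha : 0 ≤ a) :
    √(2 * a + c ^ 2) - c ≤ 2 * (√(a + c ^ 2) - c) := by
  set s := √(a + c ^ 2)
  have hs : s ^ 2 = a + c ^ 2 := Real.sq_sqrt (by positivity)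
  have hcs : c ≤ s := Real.le_sqrt_of_sq_le (by linarith)
  have hs0 : 0 ≤ s := Real.sqrt_nonneg _
  suffices √(2 * a + c ^ 2) ≤ 2 * s - c by linarith
  rw [Real.sqrt_le_left (by linarith)]
  nlinarith [sq_nonneg (s - c)]

theorem u_le_u_two_mul (m k n : ℕ) : u m k n ≤ u m k (2 * n) := by
  unfold u
  gcongr
  omega

theorem u_two_mul_le (m k n : ℕ) : u m k (2 * n) ≤ 2 * u m k n := by
  have := Real.sqrt_two_mul_add_sq_sub_le (2 * k * n) ((m : ℝ) - k / 2) (by positivity)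
  unfold u
  push_cast
  convert this using 4
  ring

theorem mem_divisors_two_mul {d n : ℕ} (hd : d ∈ n.divisors) :
    d ∈ (2 * n).divisors ∧ 2 * d ∈ (2 * n).divisors := by
  simp only [Nat.mem_divisors] at hd ⊢
  exact ⟨⟨hd.1.mul_left 2, by omega⟩, mul_dvd_mul_left 2 hd.1, by omega⟩

theorem stmt3_general (m k : ℕ) (n : ℕ) :
    hd m k n ≤ hd m k (2*n) :=
  card_filter_window_le_card_filter_window (mul_right_injective₀ two_ne_zero)
    (fun d => by push_cast; ring) (u_le_u_two_mul m k n) (u_two_mul_le m k n)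
    fun _ => mem_divisors_two_mul

theorem stmt3 (m k : ℕ) (hk : Odd k) (hk1 : 1 ≤ k) (n : ℕ) :
    hd m k n ≤ hd m k (2*n) :=
  stmt3_general m k n
end

section
/- Let m ≥ 0 be an integer, k ≥ 1 an odd integer, n ≥ 1 an odd integer, and r ≥ 0 an integer. Then h_{m,k}(2^r n) equals the number of divisors ℓ of n satisfying 2^{-r} u_{m,k}(2^r n) < 2kℓ ≤ 2 u_{m,k}(2^r n). -/
open scoped Classical

/-! Every divisor of `2^r n` with `n` odd is uniquely `2^i ℓ` with `i ≤ r` and `ℓ ∣ n`. For fixed `ℓ`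
the numbers `2^i · 2kℓ`, `i ≤ r`, double at each step, so at most one of them lies in the window
`(U, 2U]`, and one does exactly when the first is at most `2U` and the last exceeds `U`, i.e. when
`U / 2^r < 2kℓ ≤ 2U`. -/

open Finset

section DyadicWindow

variable {K : Type*} [Field K] [LinearOrder K] [IsStrictOrderedRing K] {U c : K}

theorem eq_of_pow_two_mul_mem_Ioc (hc : 0 ≤ c) {i j : ℕ}
    (hi : 2 ^ i * c ∈ Set.Ioc U (2 * U)) (hj : 2 ^ j * c ∈ Set.Ioc U (2 * U)) : i = j := by
  have key : ∀ {a b : ℕ}, a < b → 2 ^ a * c ∈ Set.Ioc U (2 * U) →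
      2 ^ b * c ∈ Set.Ioc U (2 * U) → False := by
    intro a b hab ha hb
    have : (2 : K) ^ (a + 1) * c ≤ 2 ^ b * c :=
      mul_le_mul_of_nonneg_right (pow_le_pow_right₀ one_le_two hab) hc
    rw [pow_succ] at this
    linarith [ha.1, hb.2]
  rcases lt_trichotomy i j with h | h | h
  exacts [(key h hi hj).elim, h, (key h hj hi).elim]

theorem exists_pow_two_mul_mem_Ioc_iff (hc : 0 ≤ c) (r : ℕ) :
    (∃ i ≤ r, 2 ^ i * c ∈ Set.Ioc U (2 * U)) ↔ U / 2 ^ r < c ∧ c ≤ 2 * U := by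
  constructor
  · rintro ⟨i, hir, hU, hU2⟩
    have hpow : (2 : K) ^ i * c ≤ 2 ^ r * c :=
      mul_le_mul_of_nonneg_right (pow_le_pow_right₀ one_le_two hir) hc
    refine ⟨(div_lt_iff₀' (by positivity)).2 (hU.trans_le hpow), ?_⟩
    exact (le_mul_of_one_le_left hc (one_le_pow₀ one_le_two)).trans hU2
  · induction r with
    | zero => exact fun h => ⟨0, le_rfl, by simpa using h⟩
    | succ r ih =>
      rintro ⟨hlow, hup⟩
      by_cases h : U / 2 ^ r < c
      · obtain ⟨i, hir, hi⟩ := ih ⟨h, hup⟩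
        exact ⟨i, hir.trans r.le_succ, hi⟩
      · refine ⟨r + 1, le_rfl, (div_lt_iff₀' (by positivity)).1 hlow, ?_⟩
        rw [not_lt, le_div_iff₀' (by positivity)] at h
        rw [pow_succ']
        linarith

theorem card_filter_pow_two_mul_mem_Ioc (hc : 0 ≤ c) (r : ℕ) :
    #{i ∈ range (r + 1) | 2 ^ i * c ∈ Set.Ioc U (2 * U)} =
      if U / 2 ^ r < c ∧ c ≤ 2 * U then 1 else 0 := by
  by_cases h : ∃ i ≤ r, 2 ^ i * c ∈ Set.Ioc U (2 * U)
  · rw [if_pos ((exists_pow_two_mul_mem_Ioc_iff hc r).1 h), card_eq_one]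
    obtain ⟨i, hir, hi⟩ := h
    refine ⟨i, eq_singleton_iff_unique_mem.2 ⟨?_, ?_⟩⟩
    · exact mem_filter.2 ⟨mem_range.2 (Nat.lt_succ_of_le hir), hi⟩
    · intro j hj
      exact eq_of_pow_two_mul_mem_Ioc hc (mem_filter.1 hj).2 hi
  · rw [if_neg (mt (exists_pow_two_mul_mem_Ioc_iff hc r).2 h), card_eq_zero, filter_eq_empty_iff]
    exact fun i hi hmem => h ⟨i, Nat.lt_succ_iff.1 (mem_range.1 hi), hmem⟩

end DyadicWindow

namespace Nat

theorem factorization_two_pow_mul_odd (i : ℕ) {ℓ : ℕ} (hℓ : Odd ℓ) :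
    (2 ^ i * ℓ).factorization 2 = i := by
  rw [factorization_mul (by positivity) hℓ.pos.ne', Prime.factorization_pow prime_two]
  simp [factorization_eq_zero_of_not_dvd hℓ.not_two_dvd_nat]

theorem two_pow_mul_odd_injOn : Set.InjOn (fun p : ℕ × ℕ => 2 ^ p.1 * p.2) {p | Odd p.2} := by
  rintro ⟨i, ℓ⟩ hℓ ⟨j, ℓ'⟩ hℓ' h
  simp only at h
  have hij : i = j := by
    rw [← factorization_two_pow_mul_odd i hℓ, h, factorization_two_pow_mul_odd j hℓ']
  subst hij
  simpa using h

theorem divisors_two_pow_mul (r n : ℕ) :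
    (2 ^ r * n).divisors = (range (r + 1) ×ˢ n.divisors).image fun p => 2 ^ p.1 * p.2 := by
  ext d
  simp [divisors_mul, divisors_prime_pow prime_two, mem_mul, and_assoc]

theorem card_filter_divisors_two_pow_mul (p : ℕ → Prop) [DecidablePred p] (r : ℕ) {n : ℕ}
    (hn : Odd n) :
    #{d ∈ (2 ^ r * n).divisors | p d} =
      ∑ ℓ ∈ n.divisors, #{i ∈ range (r + 1) | p (2 ^ i * ℓ)} := by
  rw [divisors_two_pow_mul, filter_image, Finset.card_image_of_injOn, card_filter,
    sum_product_right]
  · simp only [card_filter]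
  · exact two_pow_mul_odd_injOn.mono fun x hx =>
      hn.of_dvd_nat (dvd_of_mem_divisors (mem_product.1 (mem_filter.1 hx).1).2)

end Nat

theorem stmt4_general (m k : ℕ) (n : ℕ) (hn : Odd n) (r : ℕ) :
    hd m k (2^r * n) =
      (n.divisors.filter
        (fun ℓ => u m k (2^r * n) / 2^r < ((2*k*ℓ : ℕ) : ℝ) ∧
          ((2*k*ℓ : ℕ) : ℝ) ≤ 2 * u m k (2^r * n))).card := by
  rw [hd, Nat.card_filter_divisors_two_pow_mul _ r hn, card_filter]
  refine sum_congr rfl fun ℓ _ => ?_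
  rw [← card_filter_pow_two_mul_mem_Ioc (Nat.cast_nonneg (2 * k * ℓ)) r]
  congr 1
  refine filter_congr fun i _ => ?_
  rw [Set.mem_Ioc, show ((2 * k * (2 ^ i * ℓ) : ℕ) : ℝ) = 2 ^ i * ((2 * k * ℓ : ℕ) : ℝ) by
    push_cast; ring]

theorem stmt4 (m k : ℕ) (hk : Odd k) (hk1 : 1 ≤ k) (n : ℕ) (hn : Odd n) (r : ℕ) :
    hd m k (2^r * n) =
      (n.divisors.filter
        (fun ℓ => u m k (2^r * n) / 2^r < ((2*k*ℓ : ℕ) : ℝ) ∧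
          ((2*k*ℓ : ℕ) : ℝ) ≤ 2 * u m k (2^r * n))).card :=
  stmt4_general m k n hn r
end

section
/- Let k ≥ 1 be an odd integer and m ≥ 0 an integer. Then for every prime p with p ≥ max(2k, 10·|1 − 2m/k|), we have h_{m,k}(k p²) = 1. -/
open scoped Classical

/-!
Write `c = m - k/2`. The hypothesis on `p` makes `|c| ≤ kp/20`, and
`u m k (k p²) = √(2(kp)² + c²) - c` then lies in `[kp, 2kp)`. Hence `p` is a counted divisor,
and every counted divisor `d` satisfies `k ≤ p/2 < d < 2p`; a divisor of `k p²` larger than `k`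
is a multiple of `p`, so `d = p`.
-/

theorem abs_sub_half_le_of_abs_one_sub_le {m k p : ℝ} (hk : 0 < k)
    (h : 10 * |1 - 2 * m / k| ≤ p) : |m - k / 2| ≤ k * p / 20 := by
  have hrw : m - k / 2 = -(k / 2) * (1 - 2 * m / k) := by field_simp; ring
  rw [hrw, abs_mul, abs_neg, abs_of_pos (half_pos hk)]
  nlinarith

theorem sqrt_two_mul_sq_add_sq_sub_mem_Ico {a c : ℝ} (ha : 0 < a) (hc : |c| ≤ a / 4) :
    a ≤ √(2 * a ^ 2 + c ^ 2) - c ∧ √(2 * a ^ 2 + c ^ 2) - c < 2 * a := by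
  obtain ⟨hc₁, hc₂⟩ := abs_le.mp hc
  have hc_sq : c ^ 2 ≤ (a / 4) ^ 2 := sq_le_sq' hc₁ hc₂
  have hlo : 5 / 4 * a ≤ √(2 * a ^ 2 + c ^ 2) :=
    Real.le_sqrt_of_sq_le (by nlinarith [sq_nonneg c])
  have hhi : √(2 * a ^ 2 + c ^ 2) < 7 / 4 * a :=
    (Real.sqrt_lt' (by positivity)).mpr (by nlinarith)
  constructor <;> linarith

theorem u_mul_sq_eq (m k p : ℕ) :
    u m k (k * p ^ 2)
      = √(2 * ((k : ℝ) * p) ^ 2 + ((m : ℝ) - k / 2) ^ 2) - ((m : ℝ) - k / 2) := by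
  rw [u]; push_cast; ring_nf

theorem Nat.Prime.eq_of_dvd_mul_sq_of_lt {p k d : ℕ} (hp : p.Prime) (hk : k ≠ 0)
    (hd : d ∣ k * p ^ 2) (hkd : k < d) (hdp : d < 2 * p) : d = p := by
  have hpd : p ∣ d := by
    by_contra hnd
    have hcop : d.Coprime (p ^ 2) := ((hp.coprime_iff_not_dvd.mpr hnd).symm).pow_right 2
    have := Nat.le_of_dvd (Nat.pos_of_ne_zero hk) (hcop.dvd_of_dvd_mul_right hd)
    omega
  obtain ⟨e, rfl⟩ := hpd
  have he : e < 2 := Nat.lt_of_mul_lt_mul_left (by linarith : p * e < p * 2)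
  interval_cases e <;> omega

theorem filter_divisors_mul_sq_eq_singleton {k p : ℕ} (hp : p.Prime) (hk : 0 < k)
    (hkp : 2 * k ≤ p) {U : ℝ} (hU₁ : k * p ≤ U) (hU₂ : U < 2 * k * p) :
    (k * p ^ 2).divisors.filter
        (fun d => U < ((2 * k * d : ℕ) : ℝ) ∧ ((2 * k * d : ℕ) : ℝ) ≤ 2 * U) = {p} := by
  have hk' : (0 : ℝ) < k := by exact_mod_cast hk
  have hkp' : 2 * (k : ℝ) ≤ p := by exact_mod_cast hkp
  refine Finset.eq_singleton_iff_unique_mem.mpr ⟨?_, fun d hd => ?_⟩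
  · have hn : k * p ^ 2 ≠ 0 := mul_ne_zero hk.ne' (pow_ne_zero 2 hp.ne_zero)
    refine Finset.mem_filter.mpr
      ⟨Nat.mem_divisors.mpr ⟨Dvd.intro_left (k * p) (by ring), hn⟩, ?_, ?_⟩
    · push_cast; linarith
    · push_cast; linarith
  obtain ⟨hd, hlo, hhi⟩ := Finset.mem_filter.mp hd
  push_cast at hlo hhi
  have hkd : (k : ℝ) < d := by nlinarith
  have hdp : (d : ℝ) < 2 * p := by nlinarith
  exact hp.eq_of_dvd_mul_sq_of_lt hk.ne' (Nat.dvd_of_mem_divisors hd)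
    (by exact_mod_cast hkd) (by exact_mod_cast hdp)

theorem stmt7_general (m k : ℕ) (hk1 : 1 ≤ k) (p : ℕ) (hp : p.Prime)
    (hge : max ((2 * k : ℕ) : ℝ) (10 * |1 - 2*(m : ℝ)/(k : ℝ)|) ≤ (p : ℝ)) :
    hd m k (k * p^2) = 1 := by
  obtain ⟨h2k, hm⟩ := max_le_iff.mp hge
  have hk : (0 : ℝ) < k := by exact_mod_cast hk1
  have hkp : 0 < (k : ℝ) * p := by push_cast at h2k; nlinarith
  have hc := abs_sub_half_le_of_abs_one_sub_le hk hm
  obtain ⟨hu₁, hu₂⟩ :=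
    sqrt_two_mul_sq_add_sq_sub_mem_Ico hkp (c := (m : ℝ) - k / 2) (by linarith)
  rw [← u_mul_sq_eq] at hu₁ hu₂
  rw [hd, filter_divisors_mul_sq_eq_singleton hp hk1 (by exact_mod_cast h2k) hu₁
    (by linarith), Finset.card_singleton]

theorem stmt7 (m k : ℕ) (hk : Odd k) (hk1 : 1 ≤ k) (p : ℕ) (hp : p.Prime)
    (hge : max ((2 * k : ℕ) : ℝ) (10 * |1 - 2*(m : ℝ)/(k : ℝ)|) ≤ (p : ℝ)) :
    hd m k (k * p^2) = 1 :=
  stmt7_general m k hk1 p hp hge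
end

section
/- Let t ≥ 1 and m ≥ 0 be integers and k ≥ 1 an odd integer. Then for all primes q > p ≥ max(2k, 10·|1 − 2m/k|) satisfying (q/p)^{t/2} ≤ 0.96·√2, we have h_{m,k}(k p^t q^t) = 1 + t. -/
/-!
Squaring out the root in `u` turns the condition `u < 2kd ≤ 2u` into the polynomial inequalities
`d (kd + D) ≤ 2n` and `n < d (2kd + D)` with `D = 2m - k`. For `n = k P Q` with `P = pᵗ`,
`Q = qᵗ`, the hypotheses give `625 Q ≤ 1152 P` (as `1152 / 625 = (0.96 √2)²`) and `10 |D| ≤ k P`.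
Under these bounds every `d` with `P ≤ d ≤ Q` lies in the window, while `d ≤ k Q / q` and
`d ≥ 2P` do not. A divisor `e pᵃ qᵇ` of `n` (with `e ∣ k`) falls into the first range exactly
when `e = 1` and `a + b = t`, into the second when `a + b < t` (because `q > 2k`), and into the
third otherwise.
-/

open scoped Classical

def InWindow (k D n d : ℤ) : Prop :=
  d * (k * d + D) ≤ 2 * n ∧ n < d * (2 * k * d + D)

lemma window_iff_inWindow {m k n d : ℕ} (hk : 0 < k) (hd : 0 < d) :
    (u m k n < ((2 * k * d : ℕ) : ℝ) ∧ ((2 * k * d : ℕ) : ℝ) ≤ 2 * u m k n) ↔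
      InWindow k (2 * m - k) n d := by
  have hk' : (0 : ℝ) < k := by exact_mod_cast hk
  have hc : (0 : ℝ) < k * d + (m - k / 2) := by
    have : (k : ℝ) ≤ k * d := le_mul_of_one_le_right hk'.le (by exact_mod_cast hd)
    have : (0 : ℝ) ≤ m := by positivity
    linarith
  have hc' : (0 : ℝ) < 2 * k * d + (m - k / 2) := by nlinarith
  have hlower : (2 * k * d + (m - k / 2)) ^ 2 - (2 * k * n + (m - k / 2) ^ 2) =
      2 * k * (((d * (2 * k * d + (2 * m - k)) : ℤ) : ℝ) - (n : ℤ)) := by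
    push_cast; ring
  have hupper : (2 * k * n + (m - k / 2) ^ 2) - (k * d + (m - k / 2)) ^ 2 =
      k * (((2 * n : ℤ) : ℝ) - (d * (k * d + (2 * m - k)) : ℤ)) := by
    push_cast; ring
  have hhalve : (2 * k * d : ℝ) ≤ 2 * (√(2 * k * n + (m - k / 2) ^ 2) - (m - k / 2)) ↔
      k * d + (m - k / 2) ≤ √(2 * k * n + (m - k / 2) ^ 2) := by
    constructor <;> intro h <;> linarith
  unfold u InWindow
  push_cast
  rw [sub_lt_iff_lt_add, Real.sqrt_lt' hc', hhalve, Real.le_sqrt' hc, and_comm, ← sub_pos,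
    hlower, ← sub_nonneg, hupper, mul_pos_iff_of_pos_left (by positivity),
    mul_nonneg_iff_of_pos_left hk', sub_pos, sub_nonneg, Int.cast_lt, Int.cast_le]

section Window

variable {k D P Q d : ℤ}

lemma inWindow_of_le_of_le (hk : 0 < k) (hP : 0 < P) (hD : 10 * |D| ≤ k * P)
    (hQ : 625 * Q ≤ 1152 * P) (hPd : P ≤ d) (hdQ : d ≤ Q) : InWindow k D (k * P * Q) d := by
  have hkP := mul_pos hk hP
  have hkd := mul_le_mul_of_nonneg_left hPd hk.le
  have hkQ := mul_le_mul_of_nonneg_left hQ hk.le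
  constructor
  · have : k * d + D ≤ 2 * k * P := by nlinarith [le_abs_self D]
    calc d * (k * d + D) ≤ Q * (2 * k * P) := by nlinarith
      _ = 2 * (k * P * Q) := by ring
  · have : k * Q < 2 * k * d + D := by nlinarith [neg_abs_le D]
    calc k * P * Q ≤ d * (k * Q) := by nlinarith
      _ < d * (2 * k * d + D) := by nlinarith

lemma not_inWindow_of_two_mul_le (hk : 0 < k) (hP : 0 < P) (hQ₀ : 0 ≤ Q)
    (hD : 10 * |D| ≤ k * P) (hQ : 625 * Q ≤ 1152 * P) (hd : 2 * P ≤ d) :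
    ¬ InWindow k D (k * P * Q) d := by
  have hkP := mul_pos hk hP
  have hkd := mul_le_mul_of_nonneg_left hd hk.le
  have hkQ := mul_le_mul_of_nonneg_left hQ hk.le
  have hQd : k * Q < k * d + D := by nlinarith [neg_abs_le D]
  have : 2 * (k * P * Q) < d * (k * d + D) :=
    calc 2 * (k * P * Q) = 2 * P * (k * Q) := by ring
      _ ≤ d * (k * Q) := mul_le_mul_of_nonneg_right hd (mul_nonneg hk.le hQ₀)
      _ < d * (k * d + D) := mul_lt_mul_of_pos_left hQd (by linarith)
  exact fun h => absurd h.1 (not_le.2 this)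

lemma not_inWindow_of_mul_le {q : ℤ} (hk : 0 < k) (hP : 0 < P) (hQ₀ : 0 ≤ Q)
    (hD : 10 * |D| ≤ k * P) (hQ : 625 * Q ≤ 1152 * P) (hq : 2 * k < q) (hd : 0 ≤ d)
    (hdq : d * q ≤ k * Q) : ¬ InWindow k D (k * P * Q) d := by
  have hq₀ : 0 < q := by linarith
  have hkey : 2 * k * (k * Q) + q * |D| ≤ q * q * P := by
    have h4k : 4 * k * k ≤ q * q := by nlinarith
    nlinarith [mul_le_mul_of_nonneg_right h4k hQ₀, mul_le_mul_of_nonneg_left hD hq₀.le,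
      mul_le_mul_of_nonneg_left hQ (mul_nonneg hq₀.le hq₀.le),
      mul_pos (mul_pos hq₀ hP) (sub_pos.2 hq)]
  have : q * q * (d * (2 * k * d + D)) ≤ q * q * (k * P * Q) :=
    calc q * q * (d * (2 * k * d + D)) = (d * q) * (2 * k * (d * q) + q * D) := by ring
      _ ≤ (d * q) * (2 * k * (k * Q) + q * |D|) := by
          gcongr
          exact le_abs_self D
      _ ≤ (k * Q) * (q * q * P) := mul_le_mul hdq hkey (by positivity) (mul_nonneg hk.le hQ₀)
      _ = q * q * (k * P * Q) := by ring
  exact fun h => absurd h.2 (not_lt.2 (le_of_mul_le_mul_left this (by positivity)))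

end Window

lemma exists_eq_mul_pow_mul_pow_of_dvd {k p q s t d : ℕ} (hp : p.Prime) (hq : q.Prime)
    (h : d ∣ k * p ^ s * q ^ t) : ∃ e a b, e ∣ k ∧ a ≤ s ∧ b ≤ t ∧ d = e * p ^ a * q ^ b := by
  obtain ⟨d₁, _, hd₁, hd₂, rfl⟩ := exists_dvd_and_dvd_of_dvd_mul h
  obtain ⟨e, _, he, hpa, rfl⟩ := exists_dvd_and_dvd_of_dvd_mul hd₁
  obtain ⟨a, ha, rfl⟩ := (Nat.dvd_prime_pow hp).1 hpa
  obtain ⟨b, hb, rfl⟩ := (Nat.dvd_prime_pow hq).1 hd₂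
  exact ⟨e, a, b, he, ha, hb, rfl⟩

lemma pow_mul_pow_sub_injective {p q : ℕ} (hp : p.Prime) (hq : q.Prime) (hpq : p ≠ q) (t : ℕ) :
    Function.Injective fun a => p ^ a * q ^ (t - a) := by
  have hfac (a : ℕ) : (p ^ a * q ^ (t - a)).factorization p = a := by
    rw [Nat.factorization_mul (pow_ne_zero _ hp.ne_zero) (pow_ne_zero _ hq.ne_zero),
      hp.factorization_pow, hq.factorization_pow]
    simp [hpq.symm]
  intro a b hab
  rw [← hfac a, ← hfac b]
  exact congrArg (fun n => n.factorization p) hab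

section Divisors

variable {k p q t : ℕ} {D : ℤ}

lemma eq_one_and_add_eq_of_inWindow {e a b : ℕ} (hk : 0 < k) (hpq : p < q) (h2k : 2 * k ≤ p)
    (hD : 10 * |D| ≤ k * p ^ t) (hQ : 625 * q ^ t ≤ 1152 * p ^ t) (he : e ∣ k)
    (h : InWindow k D (k * p ^ t * q ^ t : ℕ) (e * p ^ a * q ^ b : ℕ)) : e = 1 ∧ a + b = t := by
  have hp : 0 < p := by omega
  have hpab : p ^ (a + b) ≤ p ^ a * q ^ b := by
    rw [pow_add]; exact Nat.mul_le_mul_left _ (Nat.pow_le_pow_left hpq.le b)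
  have hP : (0 : ℤ) < p ^ t := by positivity
  have hQ' : (625 : ℤ) * q ^ t ≤ 1152 * p ^ t := by exact_mod_cast hQ
  push_cast at h
  by_contra hne
  rcases lt_or_ge (a + b) t with hlt | hle
  · have hdq : e * p ^ a * q ^ b * q ≤ k * q ^ t :=
      calc e * p ^ a * q ^ b * q ≤ k * q ^ a * q ^ b * q := by
            gcongr
            exact Nat.le_of_dvd hk he
        _ = k * q ^ (a + b + 1) := by ring
        _ ≤ k * q ^ t := Nat.mul_le_mul_left _ (Nat.pow_le_pow_right (by omega) hlt)
    exact not_inWindow_of_mul_le (q := q) (by exact_mod_cast hk) hP (by positivity) hD hQ'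
      (by exact_mod_cast (show 2 * k < q by omega)) (by positivity) (by exact_mod_cast hdq) h
  · have hd : 2 * p ^ t ≤ e * p ^ a * q ^ b := by
      have he₀ : 0 < e := Nat.pos_of_dvd_of_pos he hk
      rcases eq_or_ne e 1 with rfl | he₁
      · calc 2 * p ^ t ≤ p * p ^ t := Nat.mul_le_mul_right _ (by omega)
          _ = p ^ (t + 1) := by ring
          _ ≤ p ^ (a + b) := Nat.pow_le_pow_right hp (by omega)
          _ ≤ 1 * p ^ a * q ^ b := by rw [one_mul]; exact hpab
      · calc 2 * p ^ t ≤ e * p ^ (a + b) :=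
              Nat.mul_le_mul (by omega) (Nat.pow_le_pow_right hp hle)
          _ ≤ e * p ^ a * q ^ b := by rw [mul_assoc]; exact Nat.mul_le_mul_left _ hpab
    exact not_inWindow_of_two_mul_le (by exact_mod_cast hk) hP (by positivity) hD hQ'
      (by exact_mod_cast hd) h

theorem card_filter_inWindow_divisors (hk : 0 < k) (hp : p.Prime) (hq : q.Prime) (hpq : p < q)
    (h2k : 2 * k ≤ p) (hD : 10 * |D| ≤ k * p ^ t) (hQ : 625 * q ^ t ≤ 1152 * p ^ t) :
    ((k * p ^ t * q ^ t).divisors.filter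
      fun d : ℕ => InWindow k D (k * p ^ t * q ^ t : ℕ) d).card = t + 1 := by
  suffices (k * p ^ t * q ^ t).divisors.filter
      (fun d : ℕ => InWindow k D (k * p ^ t * q ^ t : ℕ) d) =
      (Finset.range (t + 1)).image fun a => p ^ a * q ^ (t - a) by
    rw [this, Finset.card_image_of_injective _ (pow_mul_pow_sub_injective hp hq hpq.ne t),
      Finset.card_range]
  ext d
  simp only [Finset.mem_filter, Nat.mem_divisors, Finset.mem_image, Finset.mem_range]
  constructor
  · rintro ⟨⟨hdvd, -⟩, h⟩
    obtain ⟨e, a, b, he, -, -, rfl⟩ := exists_eq_mul_pow_mul_pow_of_dvd hp hq hdvd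
    obtain ⟨rfl, rfl⟩ := eq_one_and_add_eq_of_inWindow hk hpq h2k hD hQ he h
    exact ⟨a, by omega, by rw [one_mul, Nat.add_sub_cancel_left]⟩
  · rintro ⟨a, ha, rfl⟩
    have hp₀ := hp.pos
    have hq₀ := hq.pos
    refine ⟨⟨?_, by positivity⟩, ?_⟩
    · exact (mul_dvd_mul (pow_dvd_pow p (by omega)) (pow_dvd_pow q (Nat.sub_le t a))).trans
        (Dvd.intro_left k (mul_assoc _ _ _).symm)
    · have hPd : p ^ t ≤ p ^ a * q ^ (t - a) :=
        calc p ^ t = p ^ a * p ^ (t - a) := by rw [← pow_add, Nat.add_sub_cancel' (by omega)]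
          _ ≤ p ^ a * q ^ (t - a) := by gcongr
      have hdQ : p ^ a * q ^ (t - a) ≤ q ^ t :=
        calc p ^ a * q ^ (t - a) ≤ q ^ a * q ^ (t - a) := by gcongr
          _ = q ^ t := by rw [← pow_add, Nat.add_sub_cancel' (by omega)]
      push_cast
      exact inWindow_of_le_of_le (by exact_mod_cast hk) (by positivity) hD (by exact_mod_cast hQ)
        (by exact_mod_cast hPd) (by exact_mod_cast hdQ)

end Divisors

lemma pow_le_sq_of_rpow_half_le {x y : ℝ} (hx : 0 ≤ x) (t : ℕ) (h : x ^ ((t : ℝ) / 2) ≤ y) :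
    x ^ t ≤ y ^ 2 :=
  calc x ^ t = (x ^ ((t : ℝ) / 2)) ^ 2 := by
        rw [← Real.rpow_natCast, ← Real.rpow_mul_natCast hx]; ring_nf
    _ ≤ y ^ 2 := pow_le_pow_left₀ (Real.rpow_nonneg hx _) h 2

theorem stmt8_general (m k t : ℕ) (hk1 : 1 ≤ k) (ht : 1 ≤ t)
    (p q : ℕ) (hp : p.Prime) (hq : q.Prime) (hpq : p < q)
    (hge : max ((2 * k : ℕ) : ℝ) (10 * |1 - 2*(m : ℝ)/(k : ℝ)|) ≤ (p : ℝ))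
    (hpow : ((q : ℝ)/(p : ℝ)) ^ ((t : ℝ)/2) ≤ 0.96 * Real.sqrt 2) :
    hd m k (k * p^t * q^t) = 1 + t := by
  have hk : (0 : ℝ) < k := by exact_mod_cast hk1
  have hp₀ : (0 : ℝ) < p := by exact_mod_cast hp.pos
  have h2k : 2 * k ≤ p := by exact_mod_cast (le_max_left _ _).trans hge
  have hD : 10 * |(2 * m - k : ℤ)| ≤ k * p ^ t := by
    have h := (le_max_right _ _).trans hge
    rw [show 1 - 2 * (m : ℝ) / k = -((2 * m - k) / k) by field_simp; ring, abs_neg, abs_div,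
      abs_of_pos hk, mul_div_assoc', div_le_iff₀ hk] at h
    have : (10 * |(2 * m - k : ℤ)| : ℝ) ≤ k * p := by push_cast; linarith
    calc 10 * |(2 * m - k : ℤ)| ≤ k * p := by exact_mod_cast this
      _ ≤ k * p ^ t := by gcongr; exact_mod_cast Nat.le_self_pow (by omega) p
  have hQ : 625 * q ^ t ≤ 1152 * p ^ t := by
    have h := pow_le_sq_of_rpow_half_le (by positivity) t hpow
    rw [mul_pow, Real.sq_sqrt zero_le_two, div_pow, div_le_iff₀ (by positivity)] at h
    exact_mod_cast (by linarith : (625 : ℝ) * q ^ t ≤ 1152 * p ^ t)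
  unfold hd
  rw [Finset.filter_congr fun d hd => window_iff_inWindow hk1 (Nat.pos_of_mem_divisors hd),
    card_filter_inWindow_divisors hk1 hp hq hpq h2k hD hQ, add_comm]

theorem stmt8 (m k t : ℕ) (hk : Odd k) (hk1 : 1 ≤ k) (ht : 1 ≤ t)
    (p q : ℕ) (hp : p.Prime) (hq : q.Prime) (hpq : p < q)
    (hge : max ((2 * k : ℕ) : ℝ) (10 * |1 - 2*(m : ℝ)/(k : ℝ)|) ≤ (p : ℝ))
    (hpow : ((q : ℝ)/(p : ℝ)) ^ ((t : ℝ)/2) ≤ 0.96 * Real.sqrt 2) :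
    hd m k (k * p^t * q^t) = 1 + t :=
  stmt8_general m k t hk1 ht p q hp hq hpq hge hpow
end

section
/- For any integer m ≥ 0 and any odd integer k ≥ 1, the set {n ∈ ℕ : h_{m,k}(n) = 0} is infinite; consequently h_{m,k}(n) = 0 for infinitely many n. -/
/-
Since `u = √(2kn + c²) − c` with `c = m − k/2`, for `x ≥ 0` we have `x ≤ u` exactly when
`x (x + 2m − k) ≤ 2kn`. For a prime `p` the only divisors are `1` and `p`; once `p ≥ k + 2m + 4`
this criterion gives `2k ≤ u`, so `d = 1` is too small, and `u < kp`, so `d = p` is too large.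
Hence `h_{m,k}(p) = 0` for all large primes `p`.
-/

open scoped Classical

lemma le_u_iff {m k n : ℕ} {x : ℝ} (hx : 0 ≤ x) :
    x ≤ u m k n ↔ x * (x + 2*m - k) ≤ 2*k*n := by
  set c : ℝ := (m : ℝ) - k/2
  have hsq : (x + c)^2 - c^2 = x * (x + 2*m - k) := by ring
  rw [u, le_sub_iff_add_le, ← hsq, sub_le_iff_le_add]
  rcases le_total 0 (x + c) with hxc | hxc
  · exact Real.le_sqrt hxc (by positivity)
  · refine iff_of_true (hxc.trans (Real.sqrt_nonneg _)) ?_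
    nlinarith [sq_nonneg c, (Nat.cast_nonneg (2*k*n) : (0:ℝ) ≤ _)]

lemma two_mul_le_u {m k n : ℕ} (hn : k + 2*m ≤ n) : 2*k ≤ u m k n := by
  have hn' : (k + 2*m : ℝ) ≤ n := by exact_mod_cast hn
  rw [le_u_iff (by positivity)]
  nlinarith [(Nat.cast_nonneg k : (0:ℝ) ≤ k)]

lemma u_lt_mul {m k n : ℕ} (hk : 1 ≤ k) (hn : 4 ≤ n) : u m k n < k * n := by
  have hk' : (1 : ℝ) ≤ k := by exact_mod_cast hk
  have hn' : (4 : ℝ) ≤ n := by exact_mod_cast hn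
  have hkn : (3 : ℝ) ≤ k * n - k := by nlinarith
  rw [← not_le, le_u_iff (by positivity)]
  nlinarith [(Nat.cast_nonneg m : (0:ℝ) ≤ m), mul_pos (by linarith : (0:ℝ) < k) (by linarith : (0:ℝ) < n)]

lemma hd_eq_zero_of_prime {m k p : ℕ} (hk : 1 ≤ k) (hp : p.Prime) (hpk : k + 2*m + 4 ≤ p) :
    hd m k p = 0 := by
  rw [hd, Finset.card_eq_zero, Finset.filter_eq_empty_iff, hp.divisors]
  intro d hd
  rcases Finset.mem_insert.mp hd with rfl | hdp
  · have := two_mul_le_u (m := m) (k := k) (n := p) (by omega)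
    push_cast
    exact fun h => h.1.not_ge (by linarith)
  · rw [Finset.mem_singleton.mp hdp]
    have := u_lt_mul (m := m) (n := p) hk (by omega)
    push_cast
    exact fun h => h.2.not_gt (by linarith)

theorem stmt9_general (m k : ℕ) (hk1 : 1 ≤ k) :
    {n : ℕ | hd m k n = 0}.Infinite := by
  refine Set.infinite_of_forall_exists_gt fun a => ?_
  obtain ⟨p, hap, hp⟩ := Nat.exists_infinite_primes (a + k + 2*m + 5)
  exact ⟨p, hd_eq_zero_of_prime hk1 hp (by omega), by omega⟩

theorem stmt9 (m k : ℕ) (hk : Odd k) (hk1 : 1 ≤ k) :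
    {n : ℕ | hd m k n = 0}.Infinite :=
  stmt9_general m k hk1
end

section
/- For any integer m ≥ 0, any odd integer k ≥ 1, and any integer ℓ ≥ 0, there exist infinitely many n ∈ ℕ with h_{m,k}(n) = ℓ. In particular, limsup_{n→∞} h_{m,k}(n) = +∞. -/
open scoped Classical

/-!
With `N = ⌊u/k⌋₊`, the divisors counted by `h_{m,k}(n)` are exactly those in the dyadic
window `(N/2, N]`, and `d ≤ N` says `k·d(d-1)/2 + m·d ≤ n`. A window `(N/2, N]` contains exactly
one number `2^a·e` for each odd `e ≤ N`, so if `n = 2^s·q` with `q` odd, `q ≤ N` and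
`N < 2^(s+1)`, the window divisors of `n` correspond to the divisors of `q`. Taking `q = 3^ℓ` and
`s` large gives `h = ℓ + 1` infinitely often; a large prime `p` has `2 ≤ N < p`, hence `h = 0`.
-/

open Finset

def dyadicDivisors (n N : ℕ) : Finset ℕ := {d ∈ n.divisors | d ≤ N ∧ N < 2 * d}

theorem two_pow_mul_le_lt_iff {a e N : ℕ} (he : 0 < e) :
    (2 ^ a * e ≤ N ∧ N < 2 * (2 ^ a * e)) ↔ e ≤ N ∧ a = Nat.log 2 (N / e) := by
  constructor
  · rintro ⟨hle, hlt⟩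
    refine ⟨(Nat.le_mul_of_pos_left e (by positivity)).trans hle, ?_⟩
    refine (Nat.log_eq_of_pow_le_of_lt_pow ((Nat.le_div_iff_mul_le he).2 hle) ?_).symm
    exact (Nat.div_lt_iff_lt_mul he).2 (by rwa [pow_succ, mul_assoc, mul_left_comm])
  · rintro ⟨heN, rfl⟩
    have hNe : N / e ≠ 0 := (Nat.div_pos heN he).ne'
    refine ⟨(Nat.le_div_iff_mul_le he).1 (Nat.pow_log_le_self 2 hNe), ?_⟩
    have := (Nat.div_lt_iff_lt_mul he).1 (Nat.lt_pow_succ_log_self one_lt_two (N / e))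
    rwa [pow_succ, mul_assoc, mul_left_comm] at this

theorem card_dyadicDivisors_two_pow_mul {q s N : ℕ} (hq : Odd q) (hqN : q ≤ N)
    (hN : N < 2 ^ (s + 1)) : #(dyadicDivisors (2 ^ s * q) N) = #q.divisors := by
  have hq2 : ¬2 ∣ q := hq.not_two_dvd_nat
  have factorization_two_eq_log {d : ℕ} (hd : d ∈ dyadicDivisors (2 ^ s * q) N) :
      d.factorization 2 = Nat.log 2 (N / ordCompl[2] d) := by
    simp only [dyadicDivisors, mem_filter, Nat.mem_divisors] at hd
    have hd0 : d ≠ 0 := ne_zero_of_dvd_ne_zero hd.1.2 hd.1.1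
    refine ((two_pow_mul_le_lt_iff (Nat.ordCompl_pos 2 hd0)).1 ?_).2
    rw [Nat.ordProj_mul_ordCompl_eq_self]
    exact hd.2
  refine card_bij (fun d _ => ordCompl[2] d) (fun d hd => ?_) (fun d₁ hd₁ d₂ hd₂ h => ?_)
    fun e he => ?_
  · simp only [dyadicDivisors, mem_filter, Nat.mem_divisors] at hd
    refine Nat.mem_divisors.2 ⟨?_, hq.pos.ne'⟩
    simpa [Nat.ordCompl_pow_mul_of_not_dvd s Nat.prime_two hq2] using
      Nat.ordCompl_dvd_ordCompl_of_dvd hd.1.1 2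
  · have hfac : d₁.factorization 2 = d₂.factorization 2 := by
      rw [factorization_two_eq_log hd₁, factorization_two_eq_log hd₂, h]
    calc d₁ = 2 ^ d₁.factorization 2 * ordCompl[2] d₁ :=
          (Nat.ordProj_mul_ordCompl_eq_self d₁ 2).symm
      _ = 2 ^ d₂.factorization 2 * ordCompl[2] d₂ := by rw [h, hfac]
      _ = d₂ := Nat.ordProj_mul_ordCompl_eq_self d₂ 2
  · obtain ⟨he_dvd, -⟩ := Nat.mem_divisors.1 he
    set a := Nat.log 2 (N / e)
    have hwin := (two_pow_mul_le_lt_iff (a := a) (Nat.pos_of_dvd_of_pos he_dvd hq.pos)).2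
      ⟨(Nat.le_of_dvd hq.pos he_dvd).trans hqN, rfl⟩
    have has : a ≤ s :=
      Nat.lt_succ_iff.1 (Nat.log_lt_of_lt_pow' (by omega) ((Nat.div_le_self N e).trans_lt hN))
    have hdvd : 2 ^ a * e ∈ (2 ^ s * q).divisors := Nat.mem_divisors.2
      ⟨mul_dvd_mul (pow_dvd_pow 2 has) he_dvd, mul_ne_zero (pow_ne_zero s two_ne_zero) hq.pos.ne'⟩
    refine ⟨2 ^ a * e, mem_filter.2 ⟨hdvd, hwin⟩, ?_⟩
    exact Nat.ordCompl_pow_mul_of_not_dvd a Nat.prime_two fun h2 => hq2 (h2.trans he_dvd)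

theorem dyadicDivisors_prime_eq_empty {p N : ℕ} (hp : p.Prime) (h2N : 2 ≤ N) (hNp : N < p) :
    dyadicDivisors p N = ∅ := by
  simp only [dyadicDivisors, hp.divisors, filter_eq_empty_iff, mem_insert, mem_singleton]
  omega

theorem hd_eq_card_dyadicDivisors {m k : ℕ} (hk : 0 < k) (n : ℕ) :
    hd m k n = #(dyadicDivisors n ⌊u m k n / k⌋₊) := by
  have hk' : (0 : ℝ) < k := by exact_mod_cast hk
  refine congrArg card (filter_congr fun d hd => ?_)
  have hd0 : d ≠ 0 := (Nat.pos_of_mem_divisors hd).ne'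
  rw [Nat.le_floor_iff' hd0, Nat.floor_lt' (by omega), le_div_iff₀ hk', div_lt_iff₀ hk']
  push_cast
  constructor <;> rintro ⟨h₁, h₂⟩ <;> constructor <;> linarith

theorem le_floor_u_div_iff {m k n d : ℕ} (hk : 0 < k) (hd : 0 < d) :
    d ≤ ⌊u m k n / k⌋₊ ↔ k * d * d + 2 * m * d ≤ 2 * n + k * d := by
  have hk' : (0 : ℝ) < k := by exact_mod_cast hk
  have hd' : (1 : ℝ) ≤ d := by exact_mod_cast hd
  have hnonneg : 0 ≤ (d : ℝ) * k + (m - k / 2) := by nlinarith [m.cast_nonneg (α := ℝ)]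
  rw [Nat.le_floor_iff' hd.ne', le_div_iff₀ hk', u, le_sub_iff_add_le,
    Real.le_sqrt hnonneg (by positivity), ← sub_nonneg,
    show 2 * k * n + ((m : ℝ) - k / 2) ^ 2 - (d * k + (m - k / 2)) ^ 2
      = k * ((2 * n + k * d) - (k * d * d + 2 * m * d)) by ring,
    mul_nonneg_iff_of_pos_left hk', sub_nonneg]
  norm_cast

theorem hd_two_pow_mul {m k q s : ℕ} (hk : 0 < k) (hq : Odd q)
    (hs : k * q + 2 * m + 2 ≤ 2 ^ (s + 1)) : hd m k (2 ^ s * q) = #q.divisors := by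
  have hn : 2 * (2 ^ s * q) = 2 ^ (s + 1) * q := by ring
  rw [hd_eq_card_dyadicDivisors hk, card_dyadicDivisors_two_pow_mul hq]
  · rw [le_floor_u_div_iff hk hq.pos, hn]
    nlinarith [Nat.mul_le_mul_right q hs]
  · rw [← not_le, le_floor_u_div_iff hk (by positivity), hn]
    generalize 2 ^ (s + 1) = D at hs ⊢
    intro h
    have hkD : k * (q + 2) ≤ k * D := Nat.mul_le_mul_left k (by nlinarith)
    nlinarith [Nat.mul_le_mul_left D hkD, Nat.le_mul_of_pos_left (D * q) hk]

theorem hd_prime {m k p : ℕ} (hk : 0 < k) (hp : p.Prime) (hbig : k + 2 * m + 4 ≤ p) :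
    hd m k p = 0 := by
  rw [hd_eq_card_dyadicDivisors hk, dyadicDivisors_prime_eq_empty hp, card_empty]
  · rw [le_floor_u_div_iff hk two_pos]
    omega
  · rw [← not_le, le_floor_u_div_iff hk hp.pos]
    intro h
    nlinarith [Nat.mul_le_mul_left (k * p) hbig, Nat.le_mul_of_pos_left p hk]

theorem infinite_setOf_hd_eq {m k : ℕ} (hk : 0 < k) (ℓ : ℕ) : {n | hd m k n = ℓ}.Infinite := by
  cases ℓ with
  | zero =>
    refine (Nat.infinite_setOfPred_prime.sdiff (Set.finite_lt_nat (k + 2 * m + 4))).mono ?_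
    exact fun p ⟨hp, hbig⟩ => hd_prime hk hp (not_lt.1 hbig)
  | succ t =>
    set S := k * 3 ^ t + 2 * m + 2
    have hinj : Function.Injective fun j => 2 ^ (S + j) * 3 ^ t := fun i j h =>
      Nat.pow_right_injective le_rfl (Nat.eq_of_mul_eq_mul_right (by positivity) h) |>
        Nat.add_left_cancel
    refine Set.infinite_of_injective_forall_mem hinj fun j => ?_
    have hS : S < 2 ^ (S + j + 1) :=
      Nat.lt_two_pow_self.trans_le (Nat.pow_le_pow_right two_pos (by omega))
    rw [Set.mem_ofPred_eq, hd_two_pow_mul hk (Odd.pow (by decide)) hS.le,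
      Nat.divisors_prime_pow Nat.prime_three, card_map, card_range]

theorem stmt10_general (m k : ℕ) (hk1 : 1 ≤ k) :
    (∀ ℓ : ℕ, {n : ℕ | hd m k n = ℓ}.Infinite) ∧
      Filter.limsup (fun n : ℕ => ((hd m k n : ℕ) : ℕ∞)) Filter.atTop = ⊤ := by
  refine ⟨infinite_setOf_hd_eq hk1, ENat.eq_top_iff_forall_ge.2 fun ℓ => ?_⟩
  refine Filter.le_limsup_of_frequently_le' ?_
  exact (Nat.frequently_atTop_iff_infinite.2 (infinite_setOf_hd_eq hk1 ℓ)).mono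
    fun n (hn : hd m k n = ℓ) => by rw [hn]

theorem stmt10 (m k : ℕ) (hk : Odd k) (hk1 : 1 ≤ k) :
    (∀ ℓ : ℕ, {n : ℕ | hd m k n = ℓ}.Infinite) ∧
      Filter.limsup (fun n : ℕ => ((hd m k n : ℕ) : ℕ∞)) Filter.atTop = ⊤ :=
  stmt10_general m k hk1
end

section
/- limsup_{n→∞} h(n) = +∞, where h(n) is the n-th coefficient of the half Lerch sum ∑_{j≥1} (-1)^{j+1} q^{j(j+1)/2}/(1 - q^j). Equivalently, for every M there exists n with h(n) > M (Xiong's conjecture). -/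
open scoped Classical

/-!
For odd `N`, splitting the sum by the parity of `n` gives
`h(N) = #{d ∣ N : T d ≤ N < d(2d+1)}` with `T d = d(d+1)/2`: an odd `n` contributes
exactly when `n ∣ N` and `T n ≤ N`, an even `n = 2d` subtracts exactly when `d ∣ N` and
`T (2d) = d(2d+1) ≤ N`. The counted divisors are those in a window of ratio about `2` around
`√N`. With `Λ = (2M+1)(2M+3)⋯(4M-1)` and `N = Λ²(8M²+1)`, the `M` divisors `Λa`,
`a = 2M+1, …, 4M-1`, all lie in that window, so `h(N) ≥ M`.
-/

open Finset Filter

theorem EReal.limsup_intCast_eq_top {α : Type*} {f : Filter α} {u : α → ℤ}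
    (h : ∀ m : ℤ, ∃ᶠ x in f, m ≤ u x) : limsup (fun x => ((u x : ℝ) : EReal)) f = ⊤ := by
  refine (EReal.eq_top_iff_forall_lt _).mpr fun y => ?_
  obtain ⟨m, hm⟩ := exists_int_gt y
  refine (EReal.coe_lt_coe_iff.mpr hm).trans_le (le_limsup_of_frequently_le' ?_)
  exact (h m).mono fun x hx => EReal.coe_le_coe_iff.mpr (by exact_mod_cast hx)

namespace HalfLerch

/-- The triangular number `n(n+1)/2`, written as the exponent appears in `hcoef 1 1`. -/
def tri (n : ℕ) : ℕ := n * (n - 1) / 2 + n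

lemma two_mul_tri (n : ℕ) : 2 * tri n = n * (n + 1) := by
  obtain ⟨c, hc⟩ := (Nat.even_mul_pred_self n).two_dvd
  rcases n with _ | n
  · rfl
  · simp only [tri, Nat.add_sub_cancel] at hc ⊢
    rw [hc, Nat.mul_div_cancel_left c two_pos]
    linarith

lemma tri_two_mul (d : ℕ) : tri (2 * d) = d * (2 * d + 1) := by
  have h := two_mul_tri (2 * d)
  linarith

lemma dvd_tri_of_odd {n : ℕ} (hn : Odd n) : n ∣ tri n := by
  obtain ⟨k, rfl⟩ := hn
  refine ⟨k + 1, ?_⟩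
  have h := two_mul_tri (2 * k + 1)
  linarith

lemma tri_le_of_mul_two_mul_add_one_le {d N : ℕ} (h : d * (2 * d + 1) ≤ N) : tri d ≤ N := by
  have := two_mul_tri d
  nlinarith

lemma two_mul_dvd_sub_iff {N d : ℕ} (hN : Odd N) (hle : d * (2 * d + 1) ≤ N) :
    2 * d ∣ N - d * (2 * d + 1) ↔ d ∣ N := by
  refine ⟨fun h => (Nat.dvd_sub_iff_left hle (dvd_mul_right d _)).mp (dvd_of_mul_left_dvd h), ?_⟩
  rintro ⟨u, rfl⟩
  rw [← Nat.mul_sub, mul_comm d]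
  exact mul_dvd_mul (Nat.Odd.sub_odd (Nat.odd_mul.mp hN).2 (odd_two_mul_add_one d)).two_dvd dvd_rfl

lemma neg_one_pow_pred_mul_ite {n : ℕ} (hn : 1 ≤ n) (p : Prop) [Decidable p] :
    (-1 : ℤ) ^ (n - 1) * (if p then 1 else 0) =
      (if Odd n ∧ p then 1 else 0) - (if Even n ∧ p then 1 else 0) := by
  rcases Nat.even_or_odd n with h | h
  · rw [(Nat.Even.sub_odd hn h odd_one).neg_one_pow]
    by_cases hp : p <;> simp [h, hp, Nat.not_odd_iff_even.mpr h]
  · rw [(Nat.Odd.sub_odd h odd_one).neg_one_pow]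
    by_cases hp : p <;> simp [h, hp, Nat.not_even_iff_odd.mpr h]

lemma hcoef_one_one_eq_card_sub_card (N : ℕ) :
    hcoef 1 1 N =
      (#{n ∈ Icc 1 (2 * N + 2) | Odd n ∧ tri n ≤ N ∧ n ∣ N - tri n} : ℤ) -
        #{n ∈ Icc 1 (2 * N + 2) | Even n ∧ tri n ≤ N ∧ n ∣ N - tri n} := by
  rw [hcoef, ← sum_boole, ← sum_boole, ← sum_sub_distrib]
  refine sum_congr rfl fun n hn => ?_
  simp only [one_mul]
  exact neg_one_pow_pred_mul_ite (mem_Icc.mp hn).1 _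

lemma filter_odd_eq_filter_divisors {N : ℕ} (hN : Odd N) :
    {n ∈ Icc 1 (2 * N + 2) | Odd n ∧ tri n ≤ N ∧ n ∣ N - tri n} =
      {d ∈ N.divisors | tri d ≤ N} := by
  ext n
  simp only [mem_filter, mem_Icc, Nat.mem_divisors]
  constructor
  · rintro ⟨-, hn, hle, hdvd⟩
    exact ⟨⟨(Nat.dvd_sub_iff_left hle (dvd_tri_of_odd hn)).mp hdvd, hN.pos.ne'⟩, hle⟩
  · rintro ⟨⟨hdvd, -⟩, hle⟩
    have hn : Odd n := hN.of_dvd_nat hdvd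
    have := Nat.le_of_dvd hN.pos hdvd
    exact ⟨⟨hn.pos, by omega⟩, hn, hle, (Nat.dvd_sub_iff_left hle (dvd_tri_of_odd hn)).mpr hdvd⟩

lemma filter_even_eq_map_filter_divisors {N : ℕ} (hN : Odd N) :
    {n ∈ Icc 1 (2 * N + 2) | Even n ∧ tri n ≤ N ∧ n ∣ N - tri n} =
      {d ∈ N.divisors | d * (2 * d + 1) ≤ N}.map ⟨(2 * ·), mul_right_injective₀ two_ne_zero⟩ := by
  ext n
  simp only [mem_filter, mem_Icc, Nat.mem_divisors, Finset.mem_map, Function.Embedding.coeFn_mk]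
  constructor
  · rintro ⟨-, hn, hle, hdvd⟩
    obtain ⟨d, rfl⟩ := even_iff_two_dvd.mp hn
    rw [tri_two_mul] at hle hdvd
    exact ⟨d, ⟨⟨(two_mul_dvd_sub_iff hN hle).mp hdvd, hN.pos.ne'⟩, hle⟩, rfl⟩
  · rintro ⟨d, ⟨⟨hdvd, -⟩, hle⟩, rfl⟩
    have := Nat.pos_of_dvd_of_pos hdvd hN.pos
    have := Nat.le_of_dvd hN.pos hdvd
    rw [tri_two_mul]
    exact ⟨⟨by omega, by omega⟩, even_two_mul d, hle, (two_mul_dvd_sub_iff hN hle).mpr hdvd⟩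

theorem hcoef_one_one_of_odd {N : ℕ} (hN : Odd N) :
    hcoef 1 1 N = #{d ∈ N.divisors | tri d ≤ N ∧ N < d * (2 * d + 1)} := by
  rw [hcoef_one_one_eq_card_sub_card, filter_odd_eq_filter_divisors hN,
    filter_even_eq_map_filter_divisors hN, card_map]
  have hsplit := card_filter_add_card_filter_not (s := {d ∈ N.divisors | tri d ≤ N})
    (fun d => d * (2 * d + 1) ≤ N)
  have hle : {d ∈ {d ∈ N.divisors | tri d ≤ N} | d * (2 * d + 1) ≤ N} =
      {d ∈ N.divisors | d * (2 * d + 1) ≤ N} := by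
    rw [filter_filter]
    exact filter_congr fun d _ => and_iff_right_of_imp tri_le_of_mul_two_mul_add_one_le
  simp only [hle, filter_filter, not_le] at hsplit
  omega

theorem card_le_hcoef_one_one (S : Finset ℕ) {c : ℕ} (hc : Odd c)
    (hS : ∀ a ∈ S, Odd a ∧ a * (a + 1) ≤ 2 * c ∧ c < 2 * a ^ 2) :
    (#S : ℤ) ≤ hcoef 1 1 ((∏ a ∈ S, a) ^ 2 * c) := by
  set Λ := ∏ a ∈ S, a
  have hΛ : Odd Λ := prod_induction _ Odd (fun _ _ => Odd.mul) odd_one fun a ha => (hS a ha).1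
  have hN : Odd (Λ ^ 2 * c) := (hΛ.pow).mul hc
  rw [hcoef_one_one_of_odd hN, Nat.cast_le]
  refine card_le_card_of_injOn (Λ * ·) (fun a ha => ?_) (mul_right_injective₀ hΛ.pos.ne').injOn
  obtain ⟨-, hupper, hlower⟩ := hS a ha
  have hdvd : Λ * a ∣ Λ ^ 2 * c := by
    rw [sq, mul_assoc]
    exact mul_dvd_mul_left Λ (dvd_mul_of_dvd_left (dvd_prod_of_mem _ ha) c)
  have htri : 2 * tri (Λ * a) ≤ 2 * (Λ ^ 2 * c) := by
    rw [two_mul_tri]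
    have : Λ * a ≤ Λ ^ 2 * a := Nat.mul_le_mul_right a (Nat.le_self_pow two_ne_zero Λ)
    calc Λ * a * (Λ * a + 1) ≤ Λ ^ 2 * (a * (a + 1)) := by nlinarith
      _ ≤ Λ ^ 2 * (2 * c) := Nat.mul_le_mul_left _ hupper
      _ = 2 * (Λ ^ 2 * c) := by ring
  have hwindow : Λ ^ 2 * c < Λ * a * (2 * (Λ * a) + 1) :=
    calc Λ ^ 2 * c < Λ ^ 2 * (2 * a ^ 2) := Nat.mul_lt_mul_of_pos_left hlower (pow_pos hΛ.pos 2)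
      _ ≤ Λ * a * (2 * (Λ * a) + 1) := by nlinarith
  simp only [coe_filter, Set.mem_ofPred_eq, Nat.mem_divisors]
  exact ⟨⟨hdvd, hN.pos.ne'⟩, by omega, hwindow⟩

theorem exists_le_hcoef_one_one (M : ℕ) : ∃ N, M ≤ N ∧ (M : ℤ) ≤ hcoef 1 1 N := by
  let S := (range M).image fun j => 2 * (M + j) + 1
  have hS : ∀ a ∈ S, Odd a ∧ a * (a + 1) ≤ 2 * (8 * M ^ 2 + 1) ∧ 8 * M ^ 2 + 1 < 2 * a ^ 2 := by
    simp only [S, mem_image, mem_range]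
    rintro _ ⟨j, hj, rfl⟩
    exact ⟨odd_two_mul_add_one _, by nlinarith, by nlinarith⟩
  have hΛ : 0 < ∏ a ∈ S, a := prod_pos fun a ha => (hS a ha).1.pos
  have hcard : #S = M := by
    rw [card_image_of_injective _ fun i j h => by omega, card_range]
  refine ⟨(∏ a ∈ S, a) ^ 2 * (8 * M ^ 2 + 1), ?_,
    hcard ▸ card_le_hcoef_one_one S ⟨4 * M ^ 2, by ring⟩ hS⟩
  calc M ≤ 8 * M ^ 2 + 1 := by nlinarith
    _ ≤ _ := Nat.le_mul_of_pos_left _ (pow_pos hΛ 2)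

lemma frequently_le_hcoef_one_one (m : ℤ) : ∃ᶠ N in atTop, m ≤ hcoef 1 1 N := by
  refine frequently_atTop.mpr fun a => ?_
  obtain ⟨N, hN, hle⟩ := exists_le_hcoef_one_one (max a m.toNat)
  refine ⟨N, le_of_max_le_left hN, le_trans ?_ hle⟩
  exact (Int.self_le_toNat m).trans (by exact_mod_cast le_max_right a m.toNat)

end HalfLerch

theorem stmt11 :
    Filter.limsup (fun n : ℕ => (((hcoef 1 1 n : ℤ) : ℝ) : EReal)) Filter.atTop = ⊤ ∧
      ∀ M : ℤ, ∃ n : ℕ, M < hcoef 1 1 n :=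
  ⟨EReal.limsup_intCast_eq_top HalfLerch.frequently_le_hcoef_one_one,
    fun M => (HalfLerch.frequently_le_hcoef_one_one (M + 1)).exists.imp fun _ => Int.lt_of_add_one_le⟩
end

section
/- The identity ∑_{n≥1} (-1)^{n+1} q^{n(n+1)/2}/(1 - q^n) = ∑_{j≥1} ∑_{0≤r<j} q^{j(j+r)} (1 + q^j) holds as formal power series in q. -/
open scoped Classical

/-!
Write `N = 2^L M` with `M` odd. The terms of `q^{n(n+1)/2}/(1-q^n)` of degree `N` correspond to
the factorizations `2N = n w` with `n < w` of opposite parity; sorting them by the odd factor `u`,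
the left side becomes `#{u ∣ M | u² < 2N} - #{u ∣ M | 2N < u²}`. The right side counts the divisors
`d` of `N` with `N < 2d² ≤ 4N` (a pair `(j, r)` gives `d = j` or `d = N / j`). For a fixed odd
part `u`, the values `2d²` of `d = 2^a u` grow by factors of `4`, so exactly one `a ≤ L` lands in
that window whenever `u²` and `(M/u)²` are both `< 2N`. Finally `u ↦ M/u` shows that the left side
counts the same `u`, because `u` and `M/u` cannot both exceed `√(2N)`.
-/

open Finset

namespace HalfLerch

/-- `q^N` occurs in `q^{n(n+1)/2}/(1-q^n)` iff `2N = n(n+2m+1)` for some `m`, i.e. iff `n` is the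
smaller factor of a factorization of `2N` into factors of opposite parity. -/
def IsLowerFactor (N n : ℕ) : Prop := ∃ w, n * w = 2 * N ∧ n < w ∧ Odd (n + w)

lemma isLowerFactor_iff {N n : ℕ} (hn : 0 < n) :
    IsLowerFactor N n ↔ n * (n - 1) / 2 + n ≤ N ∧ n ∣ N - (n * (n - 1) / 2 + n) := by
  obtain ⟨k, rfl⟩ : ∃ k, n = k + 1 := ⟨n - 1, by omega⟩
  have hT : 2 * ((k + 1) * k / 2) = (k + 1) * k :=
    Nat.two_mul_div_two_of_even (by simpa using Nat.even_mul_pred_self (k + 1))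
  have hexp (j : ℕ) :
      (k + 1) * (k + 1 + 1 + 2 * j) = (k + 1) * k + 2 * (k + 1) + 2 * ((k + 1) * j) := by
    ring
  simp only [Nat.add_sub_cancel]
  constructor
  · rintro ⟨w, hw, hlt, m, hm⟩
    obtain ⟨j, rfl⟩ : ∃ j, w = k + 1 + 1 + 2 * j := ⟨(w - k - 2) / 2, by omega⟩
    have := hexp j
    exact ⟨by omega, j, by omega⟩
  · rintro ⟨hle, j, hj⟩
    refine ⟨k + 1 + 1 + 2 * j, ?_, by omega, k + 1 + j, by ring⟩
    have := hexp j
    omega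

lemma isLowerFactor_iff_of_odd {N n : ℕ} (hn : Odd n) :
    IsLowerFactor N n ↔ n ∈ N.divisors ∧ n ^ 2 < 2 * N := by
  rw [Nat.mem_divisors]
  constructor
  · rintro ⟨w, hw, hlt, -⟩
    refine ⟨⟨hn.coprime_two_right.dvd_of_dvd_mul_left ⟨w, hw.symm⟩, ?_⟩, ?_⟩
    · rintro rfl
      simp only [mul_zero, mul_eq_zero] at hw
      have := hn.pos
      omega
    · rw [sq, ← hw]
      exact Nat.mul_lt_mul_of_pos_left hlt hn.pos
  · rintro ⟨⟨⟨c, rfl⟩, -⟩, hlt⟩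
    refine ⟨2 * c, by ring, Nat.lt_of_mul_lt_mul_left (a := n) ?_, hn.add_even (even_two_mul c)⟩
    rw [← sq]
    linarith

lemma card_isLowerFactor_odd (N : ℕ) :
    #{n ∈ Icc 1 (2 * N + 2) | Odd n ∧ IsLowerFactor N n}
      = #{u ∈ N.divisors | Odd u ∧ u ^ 2 < 2 * N} := by
  congr 1
  ext n
  simp only [mem_filter, mem_Icc]
  constructor
  · rintro ⟨-, hn, h⟩
    obtain ⟨hd, hlt⟩ := (isLowerFactor_iff_of_odd hn).1 h
    exact ⟨hd, hn, hlt⟩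
  · rintro ⟨hd, hn, hlt⟩
    have := Nat.divisor_le hd
    exact ⟨⟨hn.pos, by omega⟩, hn, (isLowerFactor_iff_of_odd hn).2 ⟨hd, hlt⟩⟩

lemma card_isLowerFactor_even (N : ℕ) :
    #{n ∈ Icc 1 (2 * N + 2) | Even n ∧ IsLowerFactor N n}
      = #{w ∈ N.divisors | Odd w ∧ 2 * N < w ^ 2} := by
  refine card_nbij' (2 * N / ·) (2 * N / ·) ?_ ?_ ?_ ?_
  · intro n hn
    simp only [coe_filter, mem_Icc, Set.mem_ofPred_eq] at hn ⊢
    obtain ⟨⟨hn1, -⟩, hev, w, hw, hlt, hodd⟩ := hn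
    rw [← hw, Nat.mul_div_cancel_left _ hn1]
    have hw' : Odd w := (Nat.odd_add'.1 hodd).2 hev
    refine ⟨Nat.mem_divisors.2 ⟨hw'.coprime_two_right.dvd_of_dvd_mul_left ⟨n, ?_⟩, ?_⟩, hw', ?_⟩
    · rw [← hw]; ring
    · rintro rfl
      simp only [mul_zero, mul_eq_zero] at hw
      omega
    · rw [sq]; exact Nat.mul_lt_mul_of_pos_right hlt (by omega)
  · intro w hw
    simp only [coe_filter, mem_Icc, Set.mem_ofPred_eq, Nat.mem_divisors] at hw ⊢
    obtain ⟨⟨⟨c, hc⟩, hN⟩, hodd, hlt⟩ := hw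
    have hw0 : 0 < w := hodd.pos
    have h2N : 2 * N / w = 2 * c := by rw [hc, show 2 * (w * c) = w * (2 * c) by ring,
      Nat.mul_div_cancel_left _ hw0]
    rw [h2N]
    have hc0 : 0 < c := Nat.pos_of_ne_zero (by rintro rfl; simp_all)
    refine ⟨⟨by omega, by nlinarith⟩, even_two_mul c, w, by rw [hc]; ring, ?_,
      (even_two_mul c).add_odd hodd⟩
    refine Nat.lt_of_mul_lt_mul_left (a := w) ?_
    rw [← sq]
    linarith
  · intro n hn
    simp only [coe_filter, mem_Icc, Set.mem_ofPred_eq] at hn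
    obtain ⟨⟨hn1, -⟩, -, w, hw, hlt, -⟩ := hn
    exact Nat.div_div_self ⟨w, hw.symm⟩ (by nlinarith)
  · intro w hw
    simp only [coe_filter, Set.mem_ofPred_eq, Nat.mem_divisors] at hw
    obtain ⟨⟨hdvd, hN⟩, -⟩ := hw
    exact Nat.div_div_self (hdvd.mul_left 2) (by omega)

lemma hcoef_one_one_eq (N : ℕ) :
    hcoef 1 1 N = (#{u ∈ N.divisors | Odd u ∧ u ^ 2 < 2 * N} : ℤ)
      - #{w ∈ N.divisors | Odd w ∧ 2 * N < w ^ 2} := by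
  rw [← card_isLowerFactor_odd, ← card_isLowerFactor_even, card_filter, card_filter]
  push_cast
  rw [← sum_sub_distrib]
  refine sum_congr rfl fun n hn => ?_
  have hn1 := (mem_Icc.1 hn).1
  have hpar : Even (n - 1) ↔ Odd n := by simpa using Nat.even_sub' hn1
  simp only [one_mul, ← isLowerFactor_iff hn1, neg_one_pow_eq_ite, hpar]
  rcases Nat.even_or_odd n with h | h
  · simp [h, Nat.not_odd_iff_even.2 h, apply_ite Neg.neg]
  · simp [h, Nat.not_even_iff_odd.2 h]

lemma card_pairs_eq (N : ℕ) :
    #{p ∈ Icc 1 N ×ˢ range N | p.2 < p.1 ∧ p.1 * (p.1 + p.2) = N}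
      = #{d ∈ N.divisors | d ^ 2 ≤ N ∧ N < 2 * d ^ 2} := by
  refine card_nbij' Prod.fst (fun d => (d, N / d - d)) ?_ ?_ ?_ ?_
  · rintro ⟨j, r⟩ hp
    simp only [coe_filter, mem_product, mem_Icc, mem_range, Set.mem_ofPred_eq] at hp ⊢
    obtain ⟨⟨⟨hj, -⟩, -⟩, hr, rfl⟩ := hp
    refine ⟨Nat.mem_divisors.2 ⟨dvd_mul_right _ _, by positivity⟩, by nlinarith, by nlinarith⟩
  · intro d hd
    simp only [coe_filter, mem_product, mem_Icc, mem_range, Set.mem_ofPred_eq,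
      Nat.mem_divisors] at hd ⊢
    obtain ⟨⟨⟨c, rfl⟩, hN⟩, hle, hlt⟩ := hd
    have hd0 : 0 < d := Nat.pos_of_ne_zero (by rintro rfl; simp at hN)
    have hc0 : 0 < c := Nat.pos_of_ne_zero (by rintro rfl; simp at hN)
    have hdc : d ≤ c := by nlinarith
    have hcd : c < 2 * d := by nlinarith
    rw [Nat.mul_div_cancel_left _ hd0, Nat.add_sub_cancel' hdc]
    have : d ≤ d * c := Nat.le_mul_of_pos_right d hc0
    exact ⟨⟨⟨hd0, by nlinarith⟩, by omega⟩, by omega, rfl⟩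
  · rintro ⟨j, r⟩ hp
    simp only [coe_filter, mem_product, mem_Icc, mem_range, Set.mem_ofPred_eq] at hp
    obtain ⟨⟨⟨hj, -⟩, -⟩, -, rfl⟩ := hp
    simp [Nat.mul_div_cancel_left _ hj]
  · intro d _
    rfl

lemma card_pairs_succ_eq (N : ℕ) :
    #{p ∈ Icc 1 N ×ˢ range N | p.2 < p.1 ∧ p.1 * (p.1 + p.2) + p.1 = N}
      = #{d ∈ N.divisors | N < d ^ 2 ∧ d ^ 2 ≤ 2 * N} := by
  refine card_nbij' (fun p => p.1 + p.2 + 1) (fun d => (N / d, d - N / d - 1)) ?_ ?_ ?_ ?_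
  · rintro ⟨j, r⟩ hp
    simp only [coe_filter, mem_product, mem_Icc, mem_range, Set.mem_ofPred_eq] at hp ⊢
    obtain ⟨⟨⟨hj, -⟩, -⟩, hr, rfl⟩ := hp
    refine ⟨Nat.mem_divisors.2 ⟨⟨j, by ring⟩, by positivity⟩, by nlinarith, by nlinarith⟩
  · intro d hd
    simp only [coe_filter, mem_product, mem_Icc, mem_range, Set.mem_ofPred_eq,
      Nat.mem_divisors] at hd ⊢
    obtain ⟨⟨⟨c, rfl⟩, hN⟩, hlt, hle⟩ := hd
    have hd0 : 0 < d := Nat.pos_of_ne_zero (by rintro rfl; simp at hN)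
    have hc0 : 0 < c := Nat.pos_of_ne_zero (by rintro rfl; simp at hN)
    have hcd : c < d := by nlinarith
    have hdc : d ≤ 2 * c := by nlinarith
    rw [Nat.mul_div_cancel_left _ hd0]
    have : c ≤ d * c := Nat.le_mul_of_pos_left c hd0
    refine ⟨⟨⟨hc0, by omega⟩, by omega⟩, by omega, ?_⟩
    obtain ⟨e, rfl⟩ : ∃ e, d = c + e + 1 := ⟨d - c - 1, by omega⟩
    rw [show c + (c + e + 1 - c - 1) = c + e by omega]
    ring
  · rintro ⟨j, r⟩ hp
    simp only [coe_filter, mem_product, mem_Icc, mem_range, Set.mem_ofPred_eq] at hp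
    obtain ⟨⟨⟨hj, -⟩, -⟩, -, rfl⟩ := hp
    have : j * (j + r) + j = (j + r + 1) * j := by ring
    dsimp only
    rw [this, Nat.mul_div_cancel_left _ (Nat.succ_pos _), Prod.mk.injEq]
    omega
  · intro d hd
    simp only [coe_filter, Set.mem_ofPred_eq, Nat.mem_divisors] at hd
    obtain ⟨⟨⟨c, rfl⟩, hN⟩, hlt, -⟩ := hd
    have hd0 : 0 < d := Nat.pos_of_ne_zero (by rintro rfl; simp at hN)
    have hcd : c < d := by nlinarith
    simp only [Nat.mul_div_cancel_left _ hd0]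
    omega

lemma card_filter_sq_le_add_card_filter_lt_sq (N : ℕ) :
    #{d ∈ N.divisors | d ^ 2 ≤ N ∧ N < 2 * d ^ 2} + #{d ∈ N.divisors | N < d ^ 2 ∧ d ^ 2 ≤ 2 * N}
      = #{d ∈ N.divisors | N < 2 * d ^ 2 ∧ d ^ 2 ≤ 2 * N} := by
  rw [← card_filter_add_card_filter_not (s := {d ∈ N.divisors | N < 2 * d ^ 2 ∧ d ^ 2 ≤ 2 * N})
    (fun d => d ^ 2 ≤ N), filter_filter, filter_filter]
  congr 2 <;> refine filter_congr fun d _ => ?_ <;> omega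

lemma odd_sq_ne_two_mul {u : ℕ} (hu : Odd u) (K : ℕ) : u ^ 2 ≠ 2 * K :=
  fun h => Nat.not_even_iff_odd.2 hu.pow (h ▸ even_two_mul K)

lemma filter_divisors_two_pow_mul_odd {L M : ℕ} (hM : Odd M) (p : ℕ → Prop) [DecidablePred p] :
    {u ∈ (2 ^ L * M).divisors | Odd u ∧ p u} = {u ∈ M.divisors | p u} := by
  ext u
  simp only [mem_filter, Nat.mem_divisors]
  constructor
  · rintro ⟨⟨hdvd, -⟩, hu, hp⟩
    exact ⟨⟨(hu.coprime_two_right.pow_right L).dvd_of_dvd_mul_left hdvd, hM.pos.ne'⟩, hp⟩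
  · rintro ⟨⟨hdvd, -⟩, hp⟩
    exact ⟨⟨hdvd.mul_left _, mul_ne_zero (by positivity) hM.pos.ne'⟩, hM.of_dvd_nat hdvd, hp⟩

/-- For `N = 2^L * (x * y)` this says `N < 2 d² ≤ 4N` for `d = 2^a * x`
(`two_pow_mul_inWindow_iff`). -/
def InWindow (L x y a : ℕ) : Prop :=
  2 ^ L * y < 2 ^ (2 * a + 1) * x ∧ 2 ^ (2 * a) * x ≤ 2 ^ (L + 1) * y

section InWindow

variable {L x y a b : ℕ}

lemma two_pow_mul_inWindow_iff (hx : 0 < x) :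
    2 ^ L * (x * y) < 2 * (2 ^ a * x) ^ 2 ∧ (2 ^ a * x) ^ 2 ≤ 2 * (2 ^ L * (x * y))
      ↔ InWindow L x y a := by
  rw [InWindow, show 2 ^ L * (x * y) = 2 ^ L * y * x by ring,
    show 2 * (2 ^ a * x) ^ 2 = 2 ^ (2 * a + 1) * x * x by ring,
    show (2 ^ a * x) ^ 2 = 2 ^ (2 * a) * x * x by ring,
    show 2 * (2 ^ L * y * x) = 2 ^ (L + 1) * y * x by ring,
    Nat.mul_lt_mul_right hx, Nat.mul_le_mul_right_iff hx]

lemma InWindow.unique (ha : InWindow L x y a) (hb : InWindow L x y b) : a = b := by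
  suffices ∀ {a b}, InWindow L x y a → InWindow L x y b → b ≤ a from
    le_antisymm (this hb ha) (this ha hb)
  intro a b ha hb
  by_contra! hab
  have : 2 * (2 ^ L * y) < 2 ^ (L + 1) * y :=
    calc 2 * (2 ^ L * y) < 2 * (2 ^ (2 * a + 1) * x) := Nat.mul_lt_mul_of_pos_left ha.1 two_pos
      _ = 2 ^ (2 * a + 2) * x := by ring
      _ ≤ 2 ^ (2 * b) * x := Nat.mul_le_mul_right x (Nat.pow_le_pow_right two_pos (by omega))
      _ ≤ 2 ^ (L + 1) * y := hb.2
  rw [pow_succ] at this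
  linarith

lemma InWindow.le (ha : InWindow L x y a) : x ≤ 2 ^ (L + 1) * y :=
  (Nat.le_mul_of_pos_left x (by positivity)).trans ha.2

lemma InWindow.lt (ha : InWindow L x y a) (haL : a ≤ L) : y < 2 ^ (L + 1) * x := by
  have : 2 ^ (2 * a + 1) * x ≤ 2 ^ L * (2 ^ (L + 1) * x) :=
    calc 2 ^ (2 * a + 1) * x = 2 ^ a * 2 ^ (a + 1) * x := by ring
      _ ≤ 2 ^ L * 2 ^ (L + 1) * x := by gcongr <;> omega
      _ = 2 ^ L * (2 ^ (L + 1) * x) := by ring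
  exact Nat.lt_of_mul_lt_mul_left (ha.1.trans_le this)

lemma exists_inWindow (hy : y < 2 ^ (L + 1) * x) (hx : x ≤ 2 ^ (L + 1) * y) :
    ∃ a ≤ L, InWindow L x y a := by
  have hL : 2 ^ L * y < 2 ^ (2 * L + 1) * x :=
    calc 2 ^ L * y < 2 ^ L * (2 ^ (L + 1) * x) := Nat.mul_lt_mul_of_pos_left hy (by positivity)
      _ = 2 ^ (2 * L + 1) * x := by ring
  have hex : ∃ a, 2 ^ L * y < 2 ^ (2 * a + 1) * x := ⟨L, hL⟩
  refine ⟨Nat.find hex, Nat.find_min' hex hL, Nat.find_spec hex, ?_⟩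
  rcases h : Nat.find hex with _ | a
  · simpa using hx
  · have := not_lt.1 (Nat.find_min hex (by omega : a < Nat.find hex))
    calc 2 ^ (2 * (a + 1)) * x = 2 * (2 ^ (2 * a + 1) * x) := by ring
      _ ≤ 2 * (2 ^ L * y) := by omega
      _ = 2 ^ (L + 1) * y := by ring

end InWindow

section TwoAdic

variable {L M u : ℕ}

lemma two_pow_mul_mem_filter_iff (hM : Odd M) (hu : u ∣ M) (a : ℕ) :
    2 ^ a * u ∈ {d ∈ (2 ^ L * M).divisors | 2 ^ L * M < 2 * d ^ 2 ∧ d ^ 2 ≤ 2 * (2 ^ L * M)}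
      ↔ a ≤ L ∧ InWindow L u (M / u) a := by
  obtain ⟨v, rfl⟩ := hu
  have hu0 : 0 < u := (hM.of_dvd_nat (dvd_mul_right u v)).pos
  rw [Nat.mul_div_cancel_left v hu0, mem_filter, two_pow_mul_inWindow_iff hu0, Nat.mem_divisors]
  refine and_congr_left fun _ =>
    ⟨fun ⟨hdvd, _⟩ => ?_, fun haL => ⟨?_, mul_ne_zero (by positivity) hM.pos.ne'⟩⟩
  · have h2 : (2 ^ a).Coprime (u * v) := Nat.Coprime.pow_left a (Nat.coprime_two_left.2 hM)
    exact (Nat.pow_dvd_pow_iff_le_right one_lt_two).1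
      (h2.dvd_of_dvd_mul_right ((dvd_mul_right _ u).trans hdvd))
  · exact mul_dvd_mul (pow_dvd_pow 2 haL) (dvd_mul_right u v)

lemma mem_filter_sq_lt_iff (hM : Odd M) (hu : u ∣ M) :
    u ∈ {u ∈ M.divisors | u ^ 2 < 2 * (2 ^ L * M) ∧ (M / u) ^ 2 < 2 * (2 ^ L * M)}
      ↔ u ≤ 2 ^ (L + 1) * (M / u) ∧ M / u < 2 ^ (L + 1) * u := by
  have hodd := hM.of_dvd_nat hu
  obtain ⟨v, rfl⟩ := hu
  have hu0 : 0 < u := hodd.pos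
  rw [mem_filter, Nat.mem_divisors, Nat.mul_div_cancel_left v hu0]
  have hv0 : 0 < v := (hM.of_dvd_nat (dvd_mul_left v u)).pos
  have hu2 : u ^ 2 < 2 * (2 ^ L * (u * v)) ↔ u ≤ 2 ^ (L + 1) * v := by
    rw [Nat.lt_iff_le_and_ne, and_iff_left (odd_sq_ne_two_mul hodd _), sq,
      show 2 * (2 ^ L * (u * v)) = 2 ^ (L + 1) * v * u by ring, Nat.mul_le_mul_right_iff hu0]
  have hv2 : v ^ 2 < 2 * (2 ^ L * (u * v)) ↔ v < 2 ^ (L + 1) * u := by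
    rw [sq, show 2 * (2 ^ L * (u * v)) = 2 ^ (L + 1) * u * v by ring, Nat.mul_lt_mul_right hv0]
  rw [hu2, hv2, and_iff_right (⟨dvd_mul_right u v, hM.pos.ne'⟩ : u ∣ u * v ∧ u * v ≠ 0)]

lemma ordCompl_two_dvd_of_mem_divisors (hM : Odd M) {d : ℕ} (hd : d ∈ (2 ^ L * M).divisors) :
    ordCompl[2] d ∣ M := by
  simpa [Nat.ordCompl_pow_mul_of_not_dvd L Nat.prime_two hM.not_two_dvd_nat] using
    Nat.ordCompl_dvd_ordCompl_of_dvd (Nat.dvd_of_mem_divisors hd) 2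

lemma card_filter_divisors_two_pow_mul (hM : Odd M) :
    #{d ∈ (2 ^ L * M).divisors | 2 ^ L * M < 2 * d ^ 2 ∧ d ^ 2 ≤ 2 * (2 ^ L * M)}
      = #{u ∈ M.divisors | u ^ 2 < 2 * (2 ^ L * M) ∧ (M / u) ^ 2 < 2 * (2 ^ L * M)} := by
  refine card_bij (fun d _ => ordCompl[2] d) (fun d hd => ?_) (fun d₁ hd₁ d₂ hd₂ h => ?_)
    (fun u hu => ?_)
  · have hu := ordCompl_two_dvd_of_mem_divisors hM (mem_filter.1 hd).1
    rw [← Nat.ordProj_mul_ordCompl_eq_self d 2, two_pow_mul_mem_filter_iff hM hu] at hd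
    exact (mem_filter_sq_lt_iff hM hu).2 ⟨hd.2.le, hd.2.lt hd.1⟩
  · have hu := ordCompl_two_dvd_of_mem_divisors hM (mem_filter.1 hd₁).1
    rw [← Nat.ordProj_mul_ordCompl_eq_self d₁ 2, two_pow_mul_mem_filter_iff hM hu] at hd₁
    rw [← Nat.ordProj_mul_ordCompl_eq_self d₂ 2, ← h, two_pow_mul_mem_filter_iff hM hu] at hd₂
    rw [← Nat.ordProj_mul_ordCompl_eq_self d₁ 2, ← Nat.ordProj_mul_ordCompl_eq_self d₂ 2, h,
      hd₁.2.unique hd₂.2]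
  · have hdvd := Nat.dvd_of_mem_divisors (mem_filter.1 hu).1
    obtain ⟨hle, hlt⟩ := (mem_filter_sq_lt_iff hM hdvd).1 hu
    obtain ⟨a, haL, ha⟩ := exists_inWindow hlt hle
    exact ⟨2 ^ a * u, (two_pow_mul_mem_filter_iff hM hdvd a).2 ⟨haL, ha⟩,
      Nat.ordCompl_pow_mul_of_not_dvd a Nat.prime_two (hM.of_dvd_nat hdvd).not_two_dvd_nat⟩

end TwoAdic

lemma card_filter_sq_lt_eq (M X : ℕ) (hMX : M ≤ X) (hX : ∀ u ∈ M.divisors, u ^ 2 ≠ X) :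
    #{u ∈ M.divisors | u ^ 2 < X}
      = #{u ∈ M.divisors | u ^ 2 < X ∧ (M / u) ^ 2 < X} + #{u ∈ M.divisors | X < u ^ 2} := by
  have hswap : #{u ∈ M.divisors | X < u ^ 2} = #{u ∈ M.divisors | X < (M / u) ^ 2} := by
    simp only [card_filter]
    exact (Nat.sum_div_divisors M fun u => if X < u ^ 2 then 1 else 0).symm
  rw [hswap, ← card_filter_add_card_filter_not (s := {u ∈ M.divisors | u ^ 2 < X})
    (fun u => (M / u) ^ 2 < X), filter_filter, filter_filter]
  congr 2
  refine filter_congr fun u hu => ?_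
  have hdvd := Nat.dvd_of_mem_divisors hu
  have hv := hX (M / u) (Nat.mem_divisors.2 ⟨Nat.div_dvd_of_dvd hdvd, (Nat.mem_divisors.1 hu).2⟩)
  refine ⟨fun h => by omega, fun h => ⟨?_, by omega⟩⟩
  by_contra! hu2
  have := Nat.mul_lt_mul_of_le_of_lt hu2 h (pow_pos (Nat.pos_of_mem_divisors hu) 2)
  rw [← mul_pow, Nat.mul_div_cancel' hdvd] at this
  nlinarith

end HalfLerch

open HalfLerch

/-- The Andrews–Chan–Kim–Osburn identity
`∑_{n≥1} (-1)^{n+1} q^{n(n+1)/2}/(1-q^n) = ∑_{j≥1} ∑_{0≤r<j} q^{j(j+r)}(1+q^j)`,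
stated coefficientwise (note `n(n+1)/2 = 1·n(n-1)/2 + 1·n`, so the LHS is `hcoef 1 1`). -/
theorem stmt12 (N : ℕ) :
    hcoef 1 1 N =
      ((((Finset.Icc 1 N) ×ˢ (Finset.range N)).filter
          (fun p => p.2 < p.1 ∧ p.1 * (p.1 + p.2) = N)).card : ℤ)
      + ((((Finset.Icc 1 N) ×ˢ (Finset.range N)).filter
          (fun p => p.2 < p.1 ∧ p.1 * (p.1 + p.2) + p.1 = N)).card : ℤ) := by
  rw [hcoef_one_one_eq, card_pairs_eq, card_pairs_succ_eq, ← Nat.cast_add,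
    card_filter_sq_le_add_card_filter_lt_sq]
  obtain rfl | hN := eq_or_ne N 0
  · simp
  obtain ⟨L, M, hM, rfl⟩ := Nat.exists_eq_two_pow_mul_odd hN
  have hMX : M ≤ 2 * (2 ^ L * M) := by nlinarith [Nat.one_le_two_pow (n := L)]
  have hX (u) (hu : u ∈ M.divisors) : u ^ 2 ≠ 2 * (2 ^ L * M) :=
    odd_sq_ne_two_mul (hM.of_dvd_nat (Nat.dvd_of_mem_divisors hu)) _
  rw [filter_divisors_two_pow_mul_odd hM, filter_divisors_two_pow_mul_odd hM,
    card_filter_divisors_two_pow_mul hM, card_filter_sq_lt_eq M _ hMX hX]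
  push_cast
  ring
end
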